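/- arXiv:2209.13118 — 10 statements merged into one kernel-verified Lean document; each statement's English description precedes it below -/
import Mathlib

section
/- For coprime positive integers a, b ≥ 2 and any nonnegative integer p, the largest integer N such that the number of pairs (x,y) of nonnegative integers with ax + by = N is at most p equals (p+1)ab − a − b. -/
lemma rep_finite (a b : ℕ) (ha : 2 ≤ a) (hb : 2 ≤ b) (N : ℤ) :
    Finite {v : ℕ × ℕ // (a : ℤ) * v.1 + (b : ℤ) * v.2 = N} := by
  have haZ : (2:ℤ) ≤ (a:ℤ) := by exact_mod_cast ha
  have hbZ : (2:ℤ) ≤ (b:ℤ) := by exact_mod_cast hb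
  have key : ∀ x y : ℕ, (a : ℤ) * x + (b : ℤ) * y = N →
      x < N.toNat + 1 ∧ y < N.toNat + 1 := by
    intro x y hv
    have hx : (x : ℤ) ≤ (a:ℤ) * x := by nlinarith [Int.ofNat_nonneg x]
    have hy : (y : ℤ) ≤ (b:ℤ) * y := by nlinarith [Int.ofNat_nonneg y]
    have h1 : (0:ℤ) ≤ (a:ℤ) * x := by positivity
    have h2 : (0:ℤ) ≤ (b:ℤ) * y := by positivity
    have hxN : (x:ℤ) ≤ N := by linarith
    have hyN : (y:ℤ) ≤ N := by linarith
    constructor <;> omega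
  exact Finite.of_injective
    (fun v => ((⟨v.1.1, (key v.1.1 v.1.2 v.2).1⟩ : Fin (N.toNat+1)), (⟨v.1.2, (key v.1.1 v.1.2 v.2).2⟩ : Fin (N.toNat+1))))
    (by intro v w h
        simp only [Prod.mk.injEq, Fin.mk.injEq] at h
        exact Subtype.ext (Prod.ext h.1 h.2))

set_option maxHeartbeats 1000000 in
/-- For coprime positive integers `a, b ≥ 2` and any nonnegative integer `p`, the largest
integer `N` such that the number of pairs `(x,y)` of nonnegative integers with
`a*x + b*y = N` is at most `p` equals `(p+1)*a*b - a - b`. -/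
theorem p_frobenius_two_vars (a b : ℕ) (ha : 2 ≤ a) (hb : 2 ≤ b)
    (hab : Nat.Coprime a b) (p : ℕ) :
    IsGreatest {N : ℤ |
        Nat.card {v : ℕ × ℕ // (a : ℤ) * v.1 + (b : ℤ) * v.2 = N} ≤ p}
      ((p + 1) * a * b - a - b) := by
  have haZ : (2:ℤ) ≤ (a:ℤ) := by exact_mod_cast ha
  have hbZ : (2:ℤ) ≤ (b:ℤ) := by exact_mod_cast hb
  have hcop : IsCoprime (a:ℤ) (b:ℤ) := Nat.isCoprime_iff_coprime.mpr hab
  constructor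
  · -- membership: N₀ has at most p representations
    show Nat.card _ ≤ p
    haveI := rep_finite a b ha hb (((p:ℤ) + 1) * a * b - a - b)
    have key : ∀ v : {v : ℕ × ℕ //
        (a : ℤ) * v.1 + (b : ℤ) * v.2 = ((p:ℤ) + 1) * a * b - a - b},
        ∃ k : ℕ, (v.1.1 : ℤ) + 1 = (b:ℤ) * (k + 1) ∧ k < p := by
      rintro ⟨⟨x, y⟩, hv⟩
      simp only at hv
      have hdvd : (b:ℤ) ∣ ((x:ℤ) + 1) * a :=
        ⟨((p:ℤ)+1)*a - 1 - y, by linear_combination hv⟩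
      have hbd : (b:ℤ) ∣ (x:ℤ) + 1 := hcop.symm.dvd_of_dvd_mul_right hdvd
      obtain ⟨m, hm⟩ := hbd
      have hm1 : 1 ≤ m := by nlinarith [Int.ofNat_nonneg x]
      have h3 : (b:ℤ) * ((a:ℤ)*m) = (b:ℤ) * (((p:ℤ)+1)*a - 1 - (y:ℤ)) := by
        linear_combination -(a:ℤ) * hm + hv
      have ham : (a:ℤ)*m = ((p:ℤ)+1)*a - 1 - (y:ℤ) :=
        mul_left_cancel₀ (by linarith : (b:ℤ) ≠ 0) h3
      have hlt : (a:ℤ)*m < (a:ℤ)*((p:ℤ)+1) := by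
        nlinarith [Int.ofNat_nonneg y]
      have hmp : m < (p:ℤ) + 1 := lt_of_mul_lt_mul_left hlt (by linarith)
      refine ⟨(m-1).toNat, ?_, ?_⟩
      · rw [show ((m-1).toNat : ℤ) = m - 1 from Int.toNat_of_nonneg (by linarith)]
        linear_combination hm
      · omega
    have hinj : Function.Injective (fun v : {v : ℕ × ℕ //
        (a : ℤ) * v.1 + (b : ℤ) * v.2 = ((p:ℤ) + 1) * a * b - a - b} =>
        (⟨(key v).choose, (key v).choose_spec.2⟩ : Fin p)) := by
      intro v w h
      have hv := (key v).choose_spec.1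
      have hw := (key w).choose_spec.1
      simp only [Fin.mk.injEq] at h
      rw [h] at hv
      have hx : v.1.1 = w.1.1 := by
        have : (v.1.1 : ℤ) = (w.1.1 : ℤ) := by linarith [hv, hw]
        exact_mod_cast this
      have hy : v.1.2 = w.1.2 := by
        have h1 := v.2
        have h2 := w.2
        have : (b:ℤ) * v.1.2 = (b:ℤ) * w.1.2 := by
          rw [hx] at h1; linarith
        have := mul_left_cancel₀ (by linarith : (b:ℤ) ≠ 0) this
        exact_mod_cast this
      exact Subtype.ext (Prod.ext hx hy)
    calc Nat.card _ ≤ Nat.card (Fin p) := Nat.card_le_card_of_injective _ hinj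
      _ = p := by simp
  · -- upper bound
    rintro N hN
    simp only [Set.mem_setOf_eq] at hN
    by_contra hcon
    push_neg at hcon
    obtain ⟨u, v, huv⟩ := hcop
    obtain ⟨x₀, y₀, hx₀0, hx₀b, hsum⟩ :
        ∃ x₀ y₀ : ℤ, 0 ≤ x₀ ∧ x₀ < b ∧ (a:ℤ)*x₀ + b*y₀ = N := by
      refine ⟨(u*N) % b, v*N + a*((u*N)/b),
        Int.emod_nonneg _ (by linarith), Int.emod_lt_of_pos _ (by linarith), ?_⟩
      linear_combination (a:ℤ) * Int.mul_ediv_add_emod (u*N) b + N * huv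
    have hax₀ : (a:ℤ) * x₀ ≤ (a:ℤ) * ((b:ℤ) - 1) :=
      mul_le_mul_of_nonneg_left (by linarith) (by linarith)
    have h1 : (b:ℤ) * ((p:ℤ)*a - 1) < (b:ℤ) * y₀ := by nlinarith
    have hy₀ : (p:ℤ)*a ≤ y₀ := by
      have := lt_of_mul_lt_mul_left h1 (by linarith : (0:ℤ) ≤ b)
      linarith
    haveI := rep_finite a b ha hb N
    have key2 : ∀ k : Fin (p+1),
        (a:ℤ) * ((x₀ + (k.1:ℤ)*b).toNat : ℕ) + (b:ℤ) * ((y₀ - (k.1:ℤ)*a).toNat : ℕ) = N := by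
      intro k
      have hk : (k.1:ℤ) ≤ p := by exact_mod_cast Nat.lt_succ_iff.mp k.2
      have hk0 : (0:ℤ) ≤ (k.1:ℤ) := Int.ofNat_nonneg _
      have h2 : 0 ≤ x₀ + (k.1:ℤ)*b := by nlinarith
      have h3 : 0 ≤ y₀ - (k.1:ℤ)*a := by nlinarith
      rw [Int.toNat_of_nonneg h2, Int.toNat_of_nonneg h3]
      linear_combination hsum
    have hginj : Function.Injective (fun k : Fin (p+1) =>
        (⟨((x₀ + (k.1:ℤ)*b).toNat, (y₀ - (k.1:ℤ)*a).toNat), key2 k⟩ :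
          {v : ℕ × ℕ // (a : ℤ) * v.1 + (b : ℤ) * v.2 = N})) := by
      intro k₁ k₂ h
      simp only [Subtype.mk.injEq, Prod.mk.injEq] at h
      have hk₁ : (0:ℤ) ≤ (k₁.1:ℤ) := Int.ofNat_nonneg _
      have hk₂ : (0:ℤ) ≤ (k₂.1:ℤ) := Int.ofNat_nonneg _
      have e1 : 0 ≤ x₀ + (k₁.1:ℤ)*b := by nlinarith
      have e2 : 0 ≤ x₀ + (k₂.1:ℤ)*b := by nlinarith
      have heq : x₀ + (k₁.1:ℤ)*b = x₀ + (k₂.1:ℤ)*b := by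
        rw [← Int.toNat_of_nonneg e1, ← Int.toNat_of_nonneg e2]
        exact_mod_cast h.1
      have : (k₁.1:ℤ)*b = (k₂.1:ℤ)*b := by linarith
      have : (k₁.1:ℤ) = (k₂.1:ℤ) := mul_right_cancel₀ (by linarith : (b:ℤ) ≠ 0) this
      have : k₁.1 = k₂.1 := by exact_mod_cast this
      exact Fin.ext this
    have : p + 1 ≤ Nat.card {v : ℕ × ℕ // (a : ℤ) * v.1 + (b : ℤ) * v.2 = N} := by
      calc p + 1 = Nat.card (Fin (p+1)) := by simp
        _ ≤ _ := Nat.card_le_card_of_injective _ hginj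
    omega
end

section
/- For each p with 0 ≤ p ≤ 7, the largest integer N such that the number of triples (x,y,z) ∈ ℕ³ with 21x + 61y + 141z = N is at most p equals 141p + 947. -/
set_option maxRecDepth 20000
set_option maxHeartbeats 1000000

def cntF (n : ℕ) : Finset (ℕ × ℕ) :=
  (Finset.range 37 ×ˢ Finset.range 16).filter
    (fun w => 61 * w.1 + 141 * w.2 ≤ n ∧ (n - 61 * w.1 - 141 * w.2) % 21 = 0)

def cnt (n : ℕ) : ℕ := (cntF n).card

lemma dec1 : ∀ p ∈ Finset.range 8, cnt (141*p+947) ≤ p := by decide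

lemma dec2 : ∀ p ∈ Finset.range 8, ∀ j ∈ Finset.range 21, p+1 ≤ cnt (141*p+948+j) := by decide

lemma count_eq (n : ℕ) (hn : n ≤ 2255) :
    Nat.card {v : ℕ × ℕ × ℕ // (21 : ℤ) * v.1 + 61 * v.2.1 + 141 * v.2.2 = (n : ℤ)} = cnt n := by
  have key : ∀ v : ℕ × ℕ × ℕ,
      ((21 : ℤ) * v.1 + 61 * v.2.1 + 141 * v.2.2 = (n : ℤ)) ↔
      21 * v.1 + 61 * v.2.1 + 141 * v.2.2 = n := by
    intro v
    constructor
    · intro h; exact_mod_cast h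
    · intro h; exact_mod_cast congrArg (fun m : ℕ => (m : ℤ)) h
  rw [Nat.card_congr (Equiv.subtypeEquivRight key)]
  have e : {v : ℕ × ℕ × ℕ // 21 * v.1 + 61 * v.2.1 + 141 * v.2.2 = n} ≃
      {w : ℕ × ℕ // w ∈ cntF n} :=
  { toFun := fun v => ⟨(v.1.2.1, v.1.2.2), by
      obtain ⟨⟨x, y, z⟩, h⟩ := v
      have h' : 21 * x + 61 * y + 141 * z = n := h
      simp only [cntF, Finset.mem_filter, Finset.mem_product, Finset.mem_range]
      omega⟩
    invFun := fun w => ⟨((n - 61 * w.1.1 - 141 * w.1.2) / 21, w.1.1, w.1.2), by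
      obtain ⟨⟨y, z⟩, h⟩ := w
      simp only [cntF, Finset.mem_filter, Finset.mem_product, Finset.mem_range] at h
      have h1 : 61 * y + 141 * z ≤ n := h.2.1
      have h2 : (n - 61 * y - 141 * z) % 21 = 0 := h.2.2
      show 21 * ((n - 61 * y - 141 * z) / 21) + 61 * y + 141 * z = n
      omega⟩
    left_inv := fun v => by
      obtain ⟨⟨x, y, z⟩, h⟩ := v
      have h' : 21 * x + 61 * y + 141 * z = n := h
      apply Subtype.ext
      have hx : (n - 61 * y - 141 * z) / 21 = x := by omega
      simp [hx]
    right_inv := fun w => by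
      apply Subtype.ext
      rfl }
  rw [Nat.card_congr e, Nat.card_eq_fintype_card, Fintype.card_coe, cnt]

lemma fin (N : ℤ) : Finite {v : ℕ × ℕ × ℕ // (21 : ℤ) * v.1 + 61 * v.2.1 + 141 * v.2.2 = N} := by
  apply Set.Finite.to_subtype (s := {v : ℕ × ℕ × ℕ | (21 : ℤ) * v.1 + 61 * v.2.1 + 141 * v.2.2 = N})
  apply Set.Finite.subset (Set.finite_Icc ((0:ℕ), (0:ℕ), (0:ℕ)) (N.toNat, N.toNat, N.toNat))
  rintro ⟨x, y, z⟩ h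
  simp only [Set.mem_setOf_eq] at h
  simp only [Set.mem_Icc, Prod.le_def]
  omega

lemma mono (N : ℤ) :
    Nat.card {v : ℕ × ℕ × ℕ // (21 : ℤ) * v.1 + 61 * v.2.1 + 141 * v.2.2 = N} ≤
    Nat.card {v : ℕ × ℕ × ℕ // (21 : ℤ) * v.1 + 61 * v.2.1 + 141 * v.2.2 = N + 21} := by
  have := fin (N + 21)
  apply Nat.card_le_card_of_injective
    (fun v => (⟨(v.1.1 + 1, v.1.2.1, v.1.2.2), by
      obtain ⟨⟨x, y, z⟩, h⟩ := v
      push_cast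
      push_cast at h
      linarith⟩ : {v : ℕ × ℕ × ℕ // (21 : ℤ) * v.1 + 61 * v.2.1 + 141 * v.2.2 = N + 21}))
  rintro ⟨⟨x, y, z⟩, h⟩ ⟨⟨x', y', z'⟩, h'⟩ hab
  simp only [Subtype.mk.injEq, Prod.mk.injEq] at hab
  apply Subtype.ext
  simp only [Prod.mk.injEq]
  omega

lemma base (p : ℕ) (hp : p ≤ 7) (N : ℤ) (h1 : 141 * p + 947 < N) (h2 : N ≤ 141 * p + 968) :
    p + 1 ≤ Nat.card {v : ℕ × ℕ × ℕ // (21 : ℤ) * v.1 + 61 * v.2.1 + 141 * v.2.2 = N} := by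
  obtain ⟨n, rfl⟩ : ∃ n : ℕ, N = (n : ℤ) := ⟨N.toNat, by omega⟩
  rw [count_eq n (by omega)]
  have hj : ∃ j : ℕ, j < 21 ∧ n = 141 * p + 948 + j := ⟨n - (141 * p + 948), by omega⟩
  obtain ⟨j, hj1, rfl⟩ := hj
  exact dec2 p (by simp only [Finset.mem_range]; omega) j (by simp only [Finset.mem_range]; omega)

lemma step (p : ℕ) (hp : p ≤ 7) : ∀ k : ℕ, ∀ N : ℤ, 141 * p + 947 < N →
    N ≤ 141 * p + 947 + 21 * (k + 1) →
    p + 1 ≤ Nat.card {v : ℕ × ℕ × ℕ // (21 : ℤ) * v.1 + 61 * v.2.1 + 141 * v.2.2 = N} := by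
  intro k
  induction k with
  | zero => intro N h1 h2; exact base p hp N h1 (by omega)
  | succ k ih =>
    intro N h1 h2
    by_cases hc : N ≤ 141 * p + 968
    · exact base p hp N h1 hc
    · have h3 := ih (N - 21) (by omega) (by omega)
      have h4 := mono (N - 21)
      rw [sub_add_cancel] at h4
      omega

/-- For `0 ≤ p ≤ 7`, the `p`-Frobenius number of `21, 61, 141` is `141p + 947`. -/
theorem p_frobenius_21_61_141 (p : ℕ) (hp : p ≤ 7) :
    IsGreatest {N : ℤ |
        Nat.card {v : ℕ × ℕ × ℕ // (21 : ℤ) * v.1 + 61 * v.2.1 + 141 * v.2.2 = N} ≤ p}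
      (141 * p + 947) := by
  constructor
  · show Nat.card _ ≤ p
    have hcast : (141 * (p : ℤ) + 947) = ((141 * p + 947 : ℕ) : ℤ) := by push_cast; ring
    rw [hcast, count_eq (141 * p + 947) (by omega)]
    exact dec1 p (by simp only [Finset.mem_range]; omega)
  · intro N hN
    by_contra hlt
    push_neg at hlt
    have := step p hp (N - (141 * p + 947)).toNat N hlt (by omega)
    simp only [Set.mem_setOf_eq] at hN
    omega
end

section
/- The number of positive integers not representable as a nonnegative integer combination of 21, 61, and 141 is 474. -/
def sylStep (l : List Bool) : List Bool :=
  (l.getD 20 false || l.getD 60 false || l.getD 140 false) :: l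

def sylTab : ℕ → List Bool
  | 0 => [true]
  | n+1 => sylStep (sylTab n)

def sylP (n : ℕ) : Prop := ∃ x y z : ℕ, 21 * x + 61 * y + 141 * z = n

lemma sylTab_length (n : ℕ) : (sylTab n).length = n + 1 := by
  induction n with
  | zero => rfl
  | succ n ih => simp [sylTab, sylStep, ih]

lemma sylP_succ (n : ℕ) : sylP (n+1) ↔
    (21 ≤ n+1 ∧ sylP (n+1-21)) ∨ (61 ≤ n+1 ∧ sylP (n+1-61)) ∨
    (141 ≤ n+1 ∧ sylP (n+1-141)) := by
  constructor
  · rintro ⟨x, y, z, h⟩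
    rcases Nat.eq_zero_or_pos x with hx | hx
    · rcases Nat.eq_zero_or_pos y with hy | hy
      · have hz : 0 < z := by omega
        exact Or.inr <| Or.inr ⟨by omega, x, y, z-1, by omega⟩
      · exact Or.inr <| Or.inl ⟨by omega, x, y-1, z, by omega⟩
    · exact Or.inl ⟨by omega, x-1, y, z, by omega⟩
  · rintro (⟨h, x, y, z, hs⟩ | ⟨h, x, y, z, hs⟩ | ⟨h, x, y, z, hs⟩)
    · exact ⟨x+1, y, z, by omega⟩
    · exact ⟨x, y+1, z, by omega⟩
    · exact ⟨x, y, z+1, by omega⟩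

lemma sylTab_getD (n : ℕ) : ∀ k ≤ n, ((sylTab n).getD k false = true ↔ sylP (n - k)) := by
  induction n with
  | zero =>
    intro k hk
    interval_cases k
    simpa [sylTab] using ⟨0, 0, 0, rfl⟩
  | succ n ih =>
    intro k hk
    match k with
    | 0 =>
      show (sylStep (sylTab n)).getD 0 false = true ↔ sylP (n + 1)
      rw [sylP_succ]
      simp only [sylStep, List.getD_cons_zero, Bool.or_eq_true]
      have h21 : (sylTab n).getD 20 false = true ↔ (21 ≤ n+1 ∧ sylP (n+1-21)) := by
        rcases le_or_gt 20 n with h | h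
        · rw [ih 20 h]
          have : n + 1 - 21 = n - 20 := by omega
          rw [this]
          exact ⟨fun hp => ⟨by omega, hp⟩, fun hp => hp.2⟩
        · rw [List.getD_eq_default _ _ (by rw [sylTab_length]; omega)]
          constructor
          · intro hc; exact absurd hc (by simp)
          · intro hc; omega
      have h61 : (sylTab n).getD 60 false = true ↔ (61 ≤ n+1 ∧ sylP (n+1-61)) := by
        rcases le_or_gt 60 n with h | h
        · rw [ih 60 h]
          have : n + 1 - 61 = n - 60 := by omega
          rw [this]
          exact ⟨fun hp => ⟨by omega, hp⟩, fun hp => hp.2⟩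
        · rw [List.getD_eq_default _ _ (by rw [sylTab_length]; omega)]
          constructor
          · intro hc; exact absurd hc (by simp)
          · intro hc; omega
      have h141 : (sylTab n).getD 140 false = true ↔ (141 ≤ n+1 ∧ sylP (n+1-141)) := by
        rcases le_or_gt 140 n with h | h
        · rw [ih 140 h]
          have : n + 1 - 141 = n - 140 := by omega
          rw [this]
          exact ⟨fun hp => ⟨by omega, hp⟩, fun hp => hp.2⟩
        · rw [List.getD_eq_default _ _ (by rw [sylTab_length]; omega)]
          constructor
          · intro hc; exact absurd hc (by simp)
          · intro hc; omega
      rw [h21, h61, h141]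
      exact or_assoc
    | j+1 =>
      show (sylStep (sylTab n)).getD (j+1) false = true ↔ sylP (n + 1 - (j+1))
      rw [show (sylStep (sylTab n)).getD (j+1) false = (sylTab n).getD j false from rfl]
      rw [ih j (by omega)]
      congr! 1
      omega

set_option maxRecDepth 100000 in
lemma sylTab_take : (sylTab 968).take 21 = List.replicate 21 true := by decide

lemma sylP_of_ge (N : ℕ) (h : 948 ≤ N) : sylP N := by
  induction N using Nat.strong_induction_on with
  | _ N ih =>
    rcases le_or_gt N 968 with h968 | h968
    · have hk : (968 - N) < 21 := by omega
      have : (sylTab 968).getD (968 - N) false = true := by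
        have := sylTab_take
        have h1 : (sylTab 968).getD (968 - N) false =
            ((sylTab 968).take 21).getD (968 - N) false := by
          rw [List.getD_eq_getElem?_getD, List.getD_eq_getElem?_getD,
            List.getElem?_take_of_lt hk]
        rw [h1, this]
        have h2 : ∀ m < 21, (List.replicate 21 true).getD m false = true := by decide
        exact h2 _ hk
      have := (sylTab_getD 968 (968 - N) (by omega)).1 this
      rwa [show 968 - (968 - N) = N by omega] at this
    · have h21 : sylP (N - 21) := ih (N - 21) (by omega) (by omega)
      obtain ⟨x, y, z, hxyz⟩ := h21
      exact ⟨x + 1, y, z, by omega⟩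

open Classical in
lemma sylCount : ∀ n : ℕ,
    ((Finset.range (n+1)).filter (fun N => 0 < N ∧ ¬ sylP N)).card =
      (sylTab n).countP (fun b => !b) := by
  intro n
  induction n with
  | zero =>
    rw [show (0:ℕ)+1 = 1 from rfl, Finset.range_one, Finset.filter_singleton]
    simp [sylTab]
  | succ n ih =>
    rw [Finset.range_add_one, Finset.filter_insert]
    have hb : (sylTab (n+1)) =
        ((sylTab n).getD 20 false || (sylTab n).getD 60 false ||
          (sylTab n).getD 140 false) :: sylTab n := rfl
    rw [hb, List.countP_cons]
    have hiff := sylTab_getD (n+1) 0 (by omega)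
    rw [show n + 1 - 0 = n + 1 from rfl] at hiff
    have hd0 : (sylTab (n+1)).getD 0 false =
        ((sylTab n).getD 20 false || (sylTab n).getD 60 false ||
          (sylTab n).getD 140 false) := rfl
    rw [hd0] at hiff
    by_cases hP : sylP (n+1)
    · have hX : ((sylTab n).getD 20 false || (sylTab n).getD 60 false ||
          (sylTab n).getD 140 false) = true := hiff.2 hP
      rw [if_neg (by simp [hP]), ih, hX]
      simp
    · have hX : ((sylTab n).getD 20 false || (sylTab n).getD 60 false ||
          (sylTab n).getD 140 false) = false := by
        rcases Bool.eq_false_or_eq_true ((sylTab n).getD 20 false ||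
          (sylTab n).getD 60 false || (sylTab n).getD 140 false) with h | h
        · exact absurd (hiff.1 h) hP
        · exact h
      rw [if_pos ⟨Nat.succ_pos n, hP⟩, Finset.card_insert_of_notMem (by simp), ih, hX]
      simp

set_option maxRecDepth 100000 in
lemma sylCount_947 : (sylTab 947).countP (fun b => !b) = 474 := by decide

/-- The number of positive integers not representable as a nonnegative integer
combination of `21, 61, 141` is `474`. -/
theorem sylvester_21_61_141 :
    Nat.card {N : ℕ | 0 < N ∧ ¬ ∃ x y z : ℕ, 21 * x + 61 * y + 141 * z = N} = 474 := by
  classical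
  have hset : {N : ℕ | 0 < N ∧ ¬ ∃ x y z : ℕ, 21 * x + 61 * y + 141 * z = N} =
      ↑((Finset.range 948).filter (fun N => 0 < N ∧ ¬ sylP N)) := by
    ext N
    simp only [Set.mem_setOf_eq, Finset.coe_filter, Finset.mem_range]
    constructor
    · rintro ⟨hpos, hnr⟩
      refine ⟨?_, hpos, hnr⟩
      by_contra hge
      exact hnr (sylP_of_ge N (by omega))
    · rintro ⟨_, hpos, hnr⟩
      exact ⟨hpos, hnr⟩
  rw [hset, Nat.card_coe_set_eq, Set.ncard_coe_finset]
  have := sylCount 947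
  rw [show (947 : ℕ) + 1 = 948 from rfl] at this
  exact this.trans sylCount_947
end

section
/- For each p with 0 ≤ p ≤ 7, the number of nonnegative integers N such that #{(x,y,z) ∈ ℕ³ : 21x + 61y + 141z = N} ≤ p equals 3(158 + 60p − p²). -/
open Finset

/-- Closed-form count of `y` with `61*y ≤ M` and `21 ∣ M - 61*y`. -/
def gAux (M : ℕ) : ℕ :=
  if (10 * M) % 21 ≤ M / 61 then (M / 61 - (10 * M) % 21) / 21 + 1 else 0

/-- Closed-form count of representations of `N` by `21, 61, 141`. -/
def FAux (N : ℕ) : ℕ := ∑ z ∈ Finset.range (N / 141 + 1), gAux (N - 141 * z)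

lemma sum_x (c N : ℕ) :
    (∑ x ∈ range (N + 1), if 21 * x + c = N then 1 else 0)
      = if c ≤ N ∧ (N - c) % 21 = 0 then 1 else 0 := by
  rw [← Finset.card_filter]
  have h : (range (N + 1)).filter (fun x => 21 * x + c = N)
      = if c ≤ N ∧ (N - c) % 21 = 0 then {(N - c) / 21} else ∅ := by
    split_ifs with h <;> ext x <;>
      simp only [mem_filter, mem_range, mem_singleton, notMem_empty, iff_false] <;> omega
  rw [h]; split_ifs <;> simp

lemma sum_y (M N : ℕ) (hMN : M ≤ N) :
    (∑ y ∈ range (N + 1), if 61 * y ≤ M ∧ (M - 61 * y) % 21 = 0 then 1 else 0)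
      = gAux M := by
  rw [← Finset.card_filter]
  have key : (range (N + 1)).filter (fun y => 61 * y ≤ M ∧ (M - 61 * y) % 21 = 0)
      = Finset.image (fun t => (10 * M) % 21 + 21 * t) (range (gAux M)) := by
    by_cases h : (10 * M) % 21 ≤ M / 61
    · rw [gAux, if_pos h]
      ext y
      simp only [mem_filter, mem_range, mem_image]
      constructor
      · rintro ⟨hy, h1, h2⟩
        exact ⟨(y - (10 * M) % 21) / 21, by omega, by omega⟩
      · rintro ⟨t, ht, rfl⟩
        omega
    · rw [gAux, if_neg h]
      ext y
      simp only [mem_filter, mem_range, range_zero, image_empty, notMem_empty, iff_false,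
        not_and]
      intro hy h1 hmod
      have h2 : y % 21 = (10 * M) % 21 := by omega
      have h3 : y ≤ M / 61 := by omega
      have h4 : (10 * M) % 21 ≤ y := by omega
      exact h (h4.trans h3)
  rw [key, Finset.card_image_of_injective _ (fun a b hab => by omega), Finset.card_range]

/-- The representation finset. -/
def RAux (N : ℕ) : Finset (ℕ × ℕ × ℕ) :=
  (range (N + 1) ×ˢ range (N + 1) ×ˢ range (N + 1)).filter
    (fun v => 21 * v.1 + 61 * v.2.1 + 141 * v.2.2 = N)

lemma RAux_card (N : ℕ) : (RAux N).card = FAux N := by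
  rw [RAux, Finset.card_filter, Finset.sum_product]
  have h1 : ∀ x, (∑ v ∈ range (N + 1) ×ˢ range (N + 1),
      if 21 * x + 61 * (x, v).2.1 + 141 * (x, v).2.2 = N then 1 else 0)
      = ∑ y ∈ range (N + 1), ∑ z ∈ range (N + 1),
          if 21 * x + 61 * y + 141 * z = N then 1 else 0 := by
    intro x; rw [Finset.sum_product]
  simp only [h1]
  rw [Finset.sum_comm]
  have h2 : ∀ y ∈ range (N + 1),
      (∑ x ∈ range (N + 1), ∑ z ∈ range (N + 1),
        if 21 * x + 61 * y + 141 * z = N then 1 else 0)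
      = ∑ z ∈ range (N + 1), ∑ x ∈ range (N + 1),
          if 21 * x + 61 * y + 141 * z = N then 1 else 0 := fun y _ => Finset.sum_comm
  rw [Finset.sum_congr rfl h2, Finset.sum_comm]
  have h3 : ∀ z ∈ range (N + 1),
      (∑ y ∈ range (N + 1), ∑ x ∈ range (N + 1),
        if 21 * x + 61 * y + 141 * z = N then 1 else 0)
      = ∑ y ∈ range (N + 1),
          if 61 * y + 141 * z ≤ N ∧ (N - (61 * y + 141 * z)) % 21 = 0 then 1 else 0 := by
    intro z _
    refine Finset.sum_congr rfl fun y _ => ?_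
    rw [← sum_x (61 * y + 141 * z) N]
    exact Finset.sum_congr rfl fun x _ => if_congr (by omega) rfl rfl
  rw [Finset.sum_congr rfl h3]
  rw [FAux, ← Finset.sum_subset (Finset.range_subset_range.2 (by omega : N / 141 + 1 ≤ N + 1))]
  · refine Finset.sum_congr rfl fun z hz => ?_
    rw [mem_range] at hz
    have hzN : 141 * z ≤ N := by omega
    rw [← sum_y (N - 141 * z) N (by omega)]
    exact Finset.sum_congr rfl fun y _ => if_congr (by omega) rfl rfl
  · intro z hz hz'
    rw [mem_range] at hz hz'
    refine Finset.sum_eq_zero fun y _ => ?_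
    rw [if_neg]
    rintro ⟨h1, -⟩
    omega

lemma card_reps (N : ℕ) :
    Nat.card {v : ℕ × ℕ × ℕ // 21 * v.1 + 61 * v.2.1 + 141 * v.2.2 = N} = FAux N := by
  have hset : {v : ℕ × ℕ × ℕ | 21 * v.1 + 61 * v.2.1 + 141 * v.2.2 = N} = ↑(RAux N) := by
    ext ⟨x, y, z⟩
    simp only [Set.mem_setOf_eq, Finset.coe_filter, RAux, Finset.mem_coe, mem_filter,
      mem_product, mem_range, Set.mem_setOf_eq]
    constructor
    · intro h; exact ⟨⟨by omega, by omega, by omega⟩, h⟩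
    · exact fun h => h.2
  have : Nat.card {v : ℕ × ℕ × ℕ // 21 * v.1 + 61 * v.2.1 + 141 * v.2.2 = N}
      = Nat.card {v : ℕ × ℕ × ℕ | 21 * v.1 + 61 * v.2.1 + 141 * v.2.2 = N} := rfl
  rw [this, Nat.card_coe_set_eq, hset, Set.ncard_coe_finset, RAux_card]

lemma FAux_large (p N : ℕ) (hN : 141 * p + 1220 ≤ N) : p < FAux N := by
  have hg : ∀ z ∈ range (p + 1), 1 ≤ gAux (N - 141 * z) := by
    intro z hz
    rw [mem_range] at hz
    rw [gAux, if_pos (by omega)]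
    omega
  have h1 : p + 1 ≤ ∑ z ∈ range (p + 1), gAux (N - 141 * z) := by
    calc p + 1 = ∑ _z ∈ range (p + 1), 1 := by simp
    _ ≤ _ := Finset.sum_le_sum hg
  have h2 : ∑ z ∈ range (p + 1), gAux (N - 141 * z)
      ≤ ∑ z ∈ range (N / 141 + 1), gAux (N - 141 * z) :=
    Finset.sum_le_sum_of_subset (Finset.range_subset_range.2 (by omega))
  rw [FAux]; omega

/-- For `0 ≤ p ≤ 7`, the number of nonnegative integers having at most `p`
representations by `21, 61, 141` is `3(158 + 60p - p²)`. -/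
theorem p_sylvester_21_61_141 (p : ℕ) (hp : p ≤ 7) :
    Nat.card {N : ℕ |
        Nat.card {v : ℕ × ℕ × ℕ // 21 * v.1 + 61 * v.2.1 + 141 * v.2.2 = N} ≤ p}
      = 3 * (158 + 60 * p - p ^ 2) := by
  have hset : {N : ℕ |
        Nat.card {v : ℕ × ℕ × ℕ // 21 * v.1 + 61 * v.2.1 + 141 * v.2.2 = N} ≤ p}
      = ↑((range 2207).filter fun N => FAux N ≤ p) := by
    ext N
    simp only [Set.mem_setOf_eq, card_reps, Finset.mem_coe, mem_filter, mem_range]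
    constructor
    · intro h
      refine ⟨?_, h⟩
      by_contra hN
      exact absurd h (by simpa using (FAux_large p N (by omega)).not_ge)
    · exact fun h => h.2
  rw [hset, Nat.card_coe_set_eq, Set.ncard_coe_finset]
  interval_cases p <;> · set_option maxRecDepth 100000 in decide
end

section
/- Let a₁ < a₂ < ⋯ < a_k be positive integers with gcd 1, and for a nonnegative integer p let m_j^{(p)} (0 ≤ j ≤ a₁−1) be the least nonnegative integer congruent to j modulo a₁ that has at least p+1 representations as a nonnegative integer combination of a₁,…,a_k. Then the p-Frobenius number satisfies g_p(a₁,…,a_k) = max_{0 ≤ j ≤ a₁−1} m_j^{(p)} − a₁. -/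
/-- Lemma 1 (Apéry-set formula for the `p`-Frobenius number): if `m j` is, for each
`j < a 0`, the least nonnegative integer congruent to `j` modulo `a 0` having at least
`p+1` representations, then the `p`-Frobenius number is `max_j m j - a 0`. -/
theorem p_frobenius_via_apery (k : ℕ) (hk : 1 ≤ k) (a : Fin k → ℕ)
    (hmono : StrictMono a) (hpos : 0 < a ⟨0, hk⟩)
    (hgcd : Finset.univ.gcd a = 1) (p : ℕ) (m : ℕ → ℕ)
    (hm : ∀ j < a ⟨0, hk⟩,
      IsLeast {N : ℕ | N % a ⟨0, hk⟩ = j ∧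
        p + 1 ≤ Nat.card {x : Fin k → ℕ // ∑ i, x i * a i = N}} (m j)) :
    IsGreatest {N : ℤ |
        Nat.card {x : Fin k → ℕ // ∑ i, (x i : ℤ) * (a i : ℤ) = N} ≤ p}
      ((((Finset.range (a ⟨0, hk⟩)).sup m : ℕ) : ℤ) - (a ⟨0, hk⟩ : ℤ)) := by
  set i0 : Fin k := ⟨0, hk⟩ with hi0
  set a0 := a i0 with ha0
  have hai : ∀ i, 0 < a i := fun i =>
    lt_of_lt_of_le hpos (hmono.monotone (by simp [Fin.le_def, hi0]))
  clear_value i0 a0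
  have hfin : ∀ N : ℕ, Finite {x : Fin k → ℕ // ∑ i, x i * a i = N} := by
    intro N
    have hb : ∀ (x : {x : Fin k → ℕ // ∑ i, x i * a i = N}) (i : Fin k), x.1 i < N + 1 := by
      intro x i
      have h1 : x.1 i * a i ≤ ∑ j, x.1 j * a j :=
        Finset.single_le_sum (f := fun i => x.1 i * a i)
          (fun _ _ => Nat.zero_le _) (Finset.mem_univ i)
      rw [x.2] at h1
      have h2 : x.1 i ≤ x.1 i * a i := Nat.le_mul_of_pos_right _ (hai i)
      omega
    exact Finite.of_injective (fun x => fun i => (⟨x.1 i, hb x i⟩ : Fin (N + 1)))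
      (fun x y h => Subtype.ext (funext fun i => by
        have := congrFun h i; simpa [Fin.mk.injEq] using this))
  have hmono_card : ∀ (N t : ℕ),
      Nat.card {x : Fin k → ℕ // ∑ i, x i * a i = N} ≤
      Nat.card {x : Fin k → ℕ // ∑ i, x i * a i = N + t * a0} := by
    intro N t
    haveI := hfin (N + t * a0)
    have key : ∀ (f : Fin k → ℕ), ∑ i, f i * a i
        = f i0 * a i0 + ∑ i ∈ Finset.univ.erase i0, f i * a i :=
      fun f => (Finset.add_sum_erase _ (fun i => f i * a i) (Finset.mem_univ i0)).symm
    apply Nat.card_le_card_of_injective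
      (f := fun x => (⟨Function.update x.1 i0 (x.1 i0 + t), by
        rw [key]
        simp only [Function.update_self]
        have h2 : ∑ i ∈ Finset.univ.erase i0, Function.update x.1 i0 (x.1 i0 + t) i * a i
            = ∑ i ∈ Finset.univ.erase i0, x.1 i * a i := by
          refine Finset.sum_congr rfl fun i hi => ?_
          rw [Function.update_of_ne (Finset.ne_of_mem_erase hi)]
        rw [h2]
        have h3 := key x.1
        rw [x.2] at h3
        rw [← ha0] at h3 ⊢
        rw [add_mul]
        linarith [h3]⟩ : {x : Fin k → ℕ // ∑ i, x i * a i = N + t * a0}))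
    intro x y h
    simp only [Subtype.mk.injEq] at h
    apply Subtype.ext
    funext i
    by_cases hii : i = i0
    · have := congrFun h i
      rw [hii] at this ⊢
      simp only [Function.update_self] at this
      omega
    · have := congrFun h i
      rwa [Function.update_of_ne hii, Function.update_of_ne hii] at this
  have hcard_cast : ∀ n : ℕ,
      Nat.card {x : Fin k → ℕ // ∑ i, (x i : ℤ) * (a i : ℤ) = (n : ℤ)} =
      Nat.card {x : Fin k → ℕ // ∑ i, x i * a i = n} := by
    intro n
    apply Nat.card_congr
    apply Equiv.subtypeEquivRight
    intro x
    constructor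
    · intro h; exact_mod_cast h
    · intro h; exact_mod_cast h
  have hcard_neg : ∀ N : ℤ, N < 0 →
      Nat.card {x : Fin k → ℕ // ∑ i, (x i : ℤ) * (a i : ℤ) = N} = 0 := by
    intro N hN
    have : IsEmpty {x : Fin k → ℕ // ∑ i, (x i : ℤ) * (a i : ℤ) = N} := by
      constructor
      rintro ⟨x, hx⟩
      have hnn : (0 : ℤ) ≤ ∑ i, (x i : ℤ) * (a i : ℤ) :=
        Finset.sum_nonneg fun i _ => mul_nonneg (Int.natCast_nonneg _) (Int.natCast_nonneg _)
      rw [hx] at hnn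
      omega
    exact Nat.card_of_isEmpty
  set M := (Finset.range a0).sup m with hMdef
  clear_value M
  have ha0pos : 0 < a0 := hpos
  obtain ⟨j0, hj0mem, hj0⟩ := Finset.exists_mem_eq_sup (Finset.range a0)
    (Finset.nonempty_range_iff.mpr (by omega)) m
  rw [← hMdef] at hj0
  rw [Finset.mem_range] at hj0mem
  have hMlb : a0 - 1 ≤ M := by
    have h1 := (hm (a0 - 1) (by omega)).1.1
    have h2 : m (a0 - 1) ≤ M := by
      rw [hMdef]; exact Finset.le_sup (Finset.mem_range.mpr (by omega))
    have h3 := Nat.mod_le (m (a0 - 1)) a0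
    omega
  constructor
  · show Nat.card _ ≤ p
    rcases lt_or_ge M a0 with hlt | hge
    · have hneg : ((M : ℤ) - a0) < 0 := by
        have : (M : ℤ) < a0 := by exact_mod_cast hlt
        omega
      rw [hcard_neg _ hneg]; omega
    · have hNeq : ((M : ℤ) - (a0 : ℤ)) = ((M - a0 : ℕ) : ℤ) := by
        push_cast [Nat.cast_sub hge]
        ring
      rw [hNeq, hcard_cast]
      by_contra hcon
      push_neg at hcon
      set N := M - a0 with hN
      clear_value N
      have hj : N % a0 < a0 := Nat.mod_lt _ ha0pos
      have hle : m (N % a0) ≤ N := (hm (N % a0) hj).2 ⟨rfl, hcon⟩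
      have hMeq : M = N + a0 := by clear hcon; omega
      have hmod : M % a0 = N % a0 := by
        rw [hMeq, Nat.add_mod_right]
      have hj0mod : m j0 % a0 = j0 := (hm j0 hj0mem).1.1
      have hjj : j0 = N % a0 := by rw [← hj0mod, ← hj0, hmod]
      have hmM : m (N % a0) = M := by rw [← hjj, ← hj0]
      rw [hmM] at hle
      clear hcon
      omega
  · rintro N hNset
    by_contra hcon
    push_neg at hcon
    have hN0 : 0 ≤ N := by
      have h1 : a0 ≤ M + 1 := by omega
      have h2 : (a0 : ℤ) ≤ (M : ℤ) + 1 := by exact_mod_cast h1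
      omega
    lift N to ℕ using hN0 with n
    simp only [Set.mem_setOf_eq] at hNset
    rw [hcard_cast] at hNset
    have hlt : M < n + a0 := by
      have h1 : (M : ℤ) - a0 < n := hcon
      have h2 : (M : ℤ) < (n : ℤ) + a0 := by clear hNset; omega
      exact_mod_cast h2
    have hjlt : n % a0 < a0 := Nat.mod_lt _ ha0pos
    have hmj_le_M : m (n % a0) ≤ M := by
      rw [hMdef]; exact Finset.le_sup (Finset.mem_range.mpr hjlt)
    have hmjmod : m (n % a0) % a0 = n % a0 := (hm _ hjlt).1.1
    have hmjcard : p + 1 ≤ Nat.card {x : Fin k → ℕ // ∑ i, x i * a i = m (n % a0)} :=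
      (hm _ hjlt).1.2
    set mj := m (n % a0) with hmj
    clear_value mj
    set q1 := n / a0 with hq1
    set q2 := mj / a0 with hq2
    clear_value q1 q2
    have e1 : a0 * q1 + n % a0 = n := by rw [hq1]; exact Nat.div_add_mod n a0
    have e2 : a0 * q2 + n % a0 = mj := by
      rw [hq2]
      conv_rhs => rw [← Nat.div_add_mod mj a0]
      rw [hmjmod]
    have hq : q2 ≤ q1 := by
      have hmjlt : mj < n + a0 := lt_of_le_of_lt hmj_le_M hlt
      have h1 : a0 * q2 < a0 * (q1 + 1) := by
        rw [Nat.mul_add, Nat.mul_one]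
        linarith
      have h2 := Nat.lt_of_mul_lt_mul_left h1
      clear hNset hmjcard
      omega
    have ht : n = mj + (q1 - q2) * a0 := by
      have e : (q1 - q2) * a0 + q2 * a0 = q1 * a0 := by
        rw [← Nat.add_mul, Nat.sub_add_cancel hq]
      calc n = a0 * q1 + n % a0 := e1.symm
        _ = a0 * q2 + n % a0 + (q1 - q2) * a0 := by
            rw [Nat.mul_comm a0 q1, ← e, Nat.mul_comm a0 q2]; ring
        _ = mj + (q1 - q2) * a0 := by rw [e2]
    have hmonocard := hmono_card mj (q1 - q2)
    rw [← ht] at hmonocard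
    exact Nat.lt_irrefl _ (lt_of_lt_of_le (Nat.lt_succ_of_le hNset) (hmjcard.trans hmonocard))
end

section
/- Let a₁ < a₂ < ⋯ < a_k be positive integers with gcd 1, and for a nonnegative integer p let m_j^{(p)} (0 ≤ j ≤ a₁−1) be the least nonnegative integer congruent to j modulo a₁ that has at least p+1 representations as a nonnegative integer combination of a₁,…,a_k. Then the number of nonnegative integers with at most p representations equals (1/a₁)·Σ_{j=0}^{a₁−1} m_j^{(p)} − (a₁−1)/2. -/
/-!
The integers with at least `p + 1` representations form a set `S` closed under adding `a₁`,
since adding one copy of `a₁` turns distinct representations of `N` into distinct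
representations of `N + a₁`. Hence `N ∉ S` iff `N < m_{N mod a₁}`, so the residue class of `j`
contributes exactly `⌊m_j / a₁⌋ = (m_j - j) / a₁` integers to the complement of `S`; summing over
`j` gives the formula.
-/

open Finset

theorem Nat.lt_iff_div_lt_div_of_mod_eq {d a b : ℕ} (hd : 0 < d) (h : a % d = b % d) :
    a < b ↔ a / d < b / d := by
  rw [← Nat.div_add_mod a d, ← Nat.div_add_mod b d, h, Nat.add_lt_add_iff_right,
    Nat.mul_lt_mul_left hd, Nat.mul_add_div hd, Nat.mul_add_div hd, Nat.mod_div_self]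
  simp

def IsApery (S : Set ℕ) (d : ℕ) (m : ℕ → ℕ) : Prop :=
  ∀ j < d, IsLeast {N | N % d = j ∧ N ∈ S} (m j)

section AddClosed

variable {d : ℕ} {S : Set ℕ} {m : ℕ → ℕ}

theorem add_mul_mem_of_add_closed (hS : ∀ N ∈ S, N + d ∈ S) {N : ℕ} (hN : N ∈ S) (t : ℕ) :
    N + d * t ∈ S := by
  induction t with
  | zero => simpa using hN
  | succ t ih => simpa [Nat.mul_succ, ← Nat.add_assoc] using hS _ ih

theorem mem_of_add_closed_of_le_of_modEq (hS : ∀ N ∈ S, N + d ∈ S) {N M : ℕ} (hN : N ∈ S)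
    (hle : N ≤ M) (hmod : N ≡ M [MOD d]) : M ∈ S := by
  obtain ⟨t, ht⟩ := (Nat.modEq_iff_dvd' hle).mp hmod
  simpa [← ht, Nat.add_sub_cancel' hle] using add_mul_mem_of_add_closed hS hN t

theorem IsApery.mem_iff_le (hm : IsApery S d m) (hd : 0 < d) (hS : ∀ N ∈ S, N + d ∈ S)
    (N : ℕ) : N ∈ S ↔ m (N % d) ≤ N := by
  have hleast := hm (N % d) (Nat.mod_lt N hd)
  exact ⟨fun hN => hleast.2 ⟨rfl, hN⟩,
    fun hle => mem_of_add_closed_of_le_of_modEq hS hleast.1.2 hle hleast.1.1⟩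

theorem IsApery.notMem_iff_div_lt (hm : IsApery S d m) (hd : 0 < d) (hS : ∀ N ∈ S, N + d ∈ S)
    (N : ℕ) : N ∉ S ↔ N / d < m (N % d) / d := by
  rw [hm.mem_iff_le hd hS, not_le]
  exact Nat.lt_iff_div_lt_div_of_mod_eq hd (hm _ (Nat.mod_lt N hd)).1.1.symm

theorem IsApery.card_compl (hm : IsApery S d m) (hd : 0 < d) (hS : ∀ N ∈ S, N + d ∈ S) :
    Nat.card ↥Sᶜ = ∑ j ∈ range d, m j / d := by
  have : NeZero d := ⟨hd.ne'⟩
  let e : ↥Sᶜ ≃ Σ j : Fin d, Fin (m j / d) :=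
    ((Equiv.subtypeEquiv ((Nat.divModEquiv d).trans (Equiv.prodComm _ _)) fun N => by
      simpa using hm.notMem_iff_div_lt hd hS N).trans
      (Equiv.subtypeProdEquivSigmaSubtype fun (j : Fin d) t => t < m j / d)).trans
      (Equiv.sigmaCongrRight fun _ => Fin.equivSubtype.symm)
  rw [Nat.card_congr e, Nat.card_sigma, ← Fin.sum_univ_eq_sum_range (fun j => m j / d)]
  simp

theorem cast_sum_div_eq_of_mod_eq (hd : 0 < d) (hm : ∀ j < d, m j % d = j) :
    ((∑ j ∈ range d, m j / d : ℕ) : ℚ) = (∑ j ∈ range d, (m j : ℚ)) / d - ((d : ℚ) - 1) / 2 := by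
  have hsum : ∑ j ∈ range d, m j = d * ∑ j ∈ range d, m j / d + ∑ j ∈ range d, j := by
    rw [mul_sum, ← sum_add_distrib]
    refine sum_congr rfl fun j hj => ?_
    conv_lhs => rw [← Nat.div_add_mod (m j) d, hm j (mem_range.mp hj)]
  have hgauss : ((∑ j ∈ range d, j : ℕ) : ℚ) * 2 = d * (d - 1) := by
    rw [← Nat.cast_pred hd]
    exact_mod_cast sum_range_id_mul_two d
  have hd' : (d : ℚ) ≠ 0 := by positivity
  rw [eq_sub_iff_add_eq, eq_div_iff hd', ← Nat.cast_sum, hsum, Nat.cast_add, Nat.cast_mul]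
  linear_combination -hgauss / 2

end AddClosed

section Representations

variable {ι : Type*} [Fintype ι]

noncomputable def repCount (a : ι → ℕ) (N : ℕ) : ℕ :=
  Nat.card {x : ι → ℕ // ∑ i, x i * a i = N}

theorem finite_reps {a : ι → ℕ} (ha : ∀ i, 0 < a i) (N : ℕ) :
    Finite {x : ι → ℕ // ∑ i, x i * a i = N} := by
  classical
  refine Set.Finite.to_subtype ((Set.finite_Iic fun _ => N).subset fun x hx i => ?_)
  calc x i ≤ x i * a i := Nat.le_mul_of_pos_right _ (ha i)
    _ ≤ ∑ i, x i * a i :=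
      single_le_sum (f := fun i => x i * a i) (fun _ _ => Nat.zero_le _) (mem_univ i)
    _ = N := hx

theorem repCount_le_repCount_add {a : ι → ℕ} (ha : ∀ i, 0 < a i) (i₀ : ι) (N : ℕ) :
    repCount a N ≤ repCount a (N + a i₀) := by
  classical
  have := finite_reps ha (N + a i₀)
  refine Nat.card_le_card_of_injective (fun x => ⟨x.1 + Pi.single i₀ 1, ?_⟩) fun x y h => ?_
  · simp [add_mul, sum_add_distrib, x.2, Pi.single_apply]
  · exact Subtype.ext (add_right_cancel (congrArg Subtype.val h))

end Representations

theorem p_sylvester_via_apery_general (k : ℕ) (hk : 1 ≤ k) (a : Fin k → ℕ)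
    (hmono : StrictMono a) (hpos : 0 < a ⟨0, hk⟩)
    (p : ℕ) (m : ℕ → ℕ)
    (hm : ∀ j < a ⟨0, hk⟩,
      IsLeast {N : ℕ | N % a ⟨0, hk⟩ = j ∧
        p + 1 ≤ Nat.card {x : Fin k → ℕ // ∑ i, x i * a i = N}} (m j)) :
    (Nat.card {N : ℕ |
        Nat.card {x : Fin k → ℕ // ∑ i, x i * a i = N} ≤ p} : ℚ)
      = (∑ j ∈ Finset.range (a ⟨0, hk⟩), (m j : ℚ)) / (a ⟨0, hk⟩ : ℚ)
        - ((a ⟨0, hk⟩ : ℚ) - 1) / 2 := by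
  set S : Set ℕ := {N | p + 1 ≤ repCount a N}
  have ha : ∀ i, 0 < a i := fun i => hpos.trans_le (hmono.monotone (Nat.zero_le i.val))
  have hS : ∀ N ∈ S, N + a ⟨0, hk⟩ ∈ S :=
    fun N hN => le_trans hN (repCount_le_repCount_add ha _ N)
  have hapery : IsApery S (a ⟨0, hk⟩) m := hm
  have hcompl : {N | Nat.card {x : Fin k → ℕ // ∑ i, x i * a i = N} ≤ p} = Sᶜ :=
    Set.ext fun _ => (not_lt (α := ℕ)).symm
  rw [hcompl, hapery.card_compl hpos hS,
    cast_sum_div_eq_of_mod_eq hpos fun j hj => (hm j hj).1.1]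

/-- Lemma 2 (Apéry-set formula for the `p`-Sylvester number):
`n_p = (1/a₁) Σ_j m_j^{(p)} - (a₁-1)/2`. -/
theorem p_sylvester_via_apery (k : ℕ) (hk : 1 ≤ k) (a : Fin k → ℕ)
    (hmono : StrictMono a) (hpos : 0 < a ⟨0, hk⟩)
    (hgcd : Finset.univ.gcd a = 1) (p : ℕ) (m : ℕ → ℕ)
    (hm : ∀ j < a ⟨0, hk⟩,
      IsLeast {N : ℕ | N % a ⟨0, hk⟩ = j ∧
        p + 1 ≤ Nat.card {x : Fin k → ℕ // ∑ i, x i * a i = N}} (m j)) :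
    (Nat.card {N : ℕ |
        Nat.card {x : Fin k → ℕ // ∑ i, x i * a i = N} ≤ p} : ℚ)
      = (∑ j ∈ Finset.range (a ⟨0, hk⟩), (m j : ℚ)) / (a ⟨0, hk⟩ : ℚ)
        - ((a ⟨0, hk⟩ : ℚ) - 1) / 2 :=
  p_sylvester_via_apery_general k hk a hmono hpos p m hm
end

section
/- For every integer b ≥ 2 and every integer m ≥ 4, (b+1)b^m − 1 lies in the numerical semigroup generated by (b+1)b − 1, (b+1)b² − 1, and (b+1)b³ − 1. -/
/-- For every integer `b ≥ 2` and every `m ≥ 4`, the Thabit number `(b+1)b^m - 1`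
lies in the numerical semigroup generated by `(b+1)b-1`, `(b+1)b²-1`, `(b+1)b³-1`. -/
theorem thabit_bm_mem (b : ℤ) (hb : 2 ≤ b) (m : ℕ) (hm : 4 ≤ m) :
    ∃ x y z : ℕ, (b + 1) * b ^ m - 1
      = (x : ℤ) * ((b + 1) * b - 1) + (y : ℤ) * ((b + 1) * b ^ 2 - 1)
        + (z : ℤ) * ((b + 1) * b ^ 3 - 1) := by
  obtain ⟨n, rfl⟩ : ∃ n : ℕ, b = (n : ℤ) :=
    ⟨b.toNat, (Int.toNat_of_nonneg (by linarith)).symm⟩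
  have hn : 2 ≤ n := by exact_mod_cast hb
  suffices h : ∃ x y z : ℕ, 2 ≤ x + y ∧ ((n : ℤ) + 1) * (n : ℤ) ^ m - 1
      = (x : ℤ) * (((n : ℤ) + 1) * (n : ℤ) - 1) + (y : ℤ) * (((n : ℤ) + 1) * (n : ℤ) ^ 2 - 1)
        + (z : ℤ) * (((n : ℤ) + 1) * (n : ℤ) ^ 3 - 1) by
    obtain ⟨x, y, z, _, heq⟩ := h
    exact ⟨x, y, z, heq⟩
  induction m, hm using Nat.le_induction with
  | base =>
    refine ⟨n ^ 3 - n - 1, 2, 0, by omega, ?_⟩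
    have h0 : 2 * 2 ≤ n * n := Nat.mul_le_mul hn hn
    have h1 : n + 1 ≤ n ^ 3 := by nlinarith
    push_cast [Nat.cast_sub (show 1 ≤ n ^ 3 - n by omega),
      Nat.cast_sub (show n ≤ n ^ 3 by omega)]
    ring
  | succ m hm ih =>
    obtain ⟨x, y, z, hxy, heq⟩ := ih
    rcases x with _ | x'
    · -- x = 0, so y ≥ 2; trade: n * g2 + (n-1) = g3
      refine ⟨0, n * (y - 1), n * z + 1, ?_, ?_⟩
      · have h2 : 2 * 1 ≤ n * (y - 1) := Nat.mul_le_mul hn (by omega)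
        omega
      · push_cast [Nat.cast_sub (show 1 ≤ y by omega)] at heq ⊢
        linear_combination (n : ℤ) * heq
    · -- x = x' + 1 ≥ 1; trade: n * g1 + (n-1) = g2
      refine ⟨n * x', n * y + 1, n * z, ?_, ?_⟩
      · have h2 : 2 * 1 ≤ n * (x' + y) := Nat.mul_le_mul hn (by omega)
        rw [Nat.mul_add] at h2
        omega
      · push_cast at heq ⊢
        linear_combination (n : ℤ) * heq
end

section
/- Let a ≥ 1, b ≥ 2, c > 0, n ≥ 1 be integers with gcd(a·b^n − c, a·b^{n+1} − c, a·b^{n+2} − c) = 1 and a·b^n − c > 0. Set q = ⌊(a·b^n − c)/(b+1)⌋ and r = (a·b^n − c) − (b+1)q, and suppose r ≥ 1. Then for each integer p with 0 ≤ p ≤ q, the largest integer N having at most p representations as a nonnegative integer combination of a·b^n − c, a·b^{n+1} − c, a·b^{n+2} − c equals (r−1)(a·b^{n+1} − c) + (q+p)(a·b^{n+2} − c) − (a·b^n − c). -/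
/-!
The generators `A₁, A₂, A₃ = a bⁿ - c, a bⁿ⁺¹ - c, a bⁿ⁺² - c` satisfy `A₃ = (b + 1) A₂ - b A₁`,
so a representation `(x, y, z)` of `N` has `A₂ y + A₃ z = t A₂ - b z A₁` with weight
`t = y + (b + 1) z`. It is therefore determined by `(t, z)`, and as `A₁` and `A₂` are coprime, `N` fixes `t` modulo `A₁`. At the claimed value
`F = (r - 1) A₂ + (q + p) A₃ - A₁` every representation has weight `(b + 1) p - 1`, which leaves
at most `p` choices of `z`. Above `F`, if `τ` is the least weight allowed by `N`, the weights `τ`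
and `τ + A₁` together admit at least `p + 1` values of `z`.
-/

abbrev Reps (A₁ A₂ A₃ N : ℤ) : Type :=
  {v : ℕ × ℕ × ℕ // A₁ * v.1 + A₂ * v.2.1 + A₃ * v.2.2 = N}

theorem Reps.finite {A₁ A₂ A₃ : ℤ} (h₁ : 0 < A₁) (h₂ : 0 < A₂) (h₃ : 0 < A₃) (N : ℤ) :
    Finite (Reps A₁ A₂ A₃ N) := by
  refine Set.Finite.to_subtype ((Set.finite_Iic (N.toNat, N.toNat, N.toNat)).subset ?_)
  rintro ⟨x, y, z⟩ (h : A₁ * x + A₂ * y + A₃ * z = N)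
  have hx : (x : ℤ) ≤ A₁ * x := le_mul_of_one_le_left (by positivity) h₁
  have hy : (y : ℤ) ≤ A₂ * y := le_mul_of_one_le_left (by positivity) h₂
  have hz : (z : ℤ) ≤ A₃ * z := le_mul_of_one_le_left (by positivity) h₃
  simp only [Set.mem_Iic, Prod.mk_le_mk]
  omega

theorem natCard_le_of_injective {α : Type*} {f : α → ℤ} (hf : Function.Injective f) {p : ℤ}
    (hp : 0 ≤ p) (hmem : ∀ a, f a ∈ Set.Ico 0 p) : (Nat.card α : ℤ) ≤ p := by
  have := Nat.card_le_card_of_injective (fun a ↦ (⟨f a, hmem a⟩ : Set.Ico 0 p))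
    fun a b hab ↦ hf (congrArg Subtype.val hab)
  rw [Nat.card_coe_set_eq, ← Finset.coe_Ico, Set.ncard_coe_finset, Int.card_Ico] at this
  omega

theorem le_natCard_of_injOn {α : Type*} [Finite α] (f : α → ℤ) {g : ℤ → ℤ} {p : ℤ}
    (hg : Set.InjOn g (Set.Icc 0 p)) (h : ∀ j ∈ Set.Icc 0 p, ∃ a, f a = g j) :
    p + 1 ≤ (Nat.card α : ℤ) := by
  have hsub : g '' Set.Icc 0 p ⊆ Set.range f := by
    rintro _ ⟨j, hj, rfl⟩
    exact h j hj
  have := hg.ncard_image.symm.trans_le ((Set.ncard_le_ncard hsub).trans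
    ((Set.image_univ (f := f)) ▸ Set.ncard_image_le Set.finite_univ))
  rw [← Finset.coe_Icc, Set.ncard_coe_finset, Int.card_Icc, Set.ncard_univ] at this
  omega

theorem exists_emod_dvd_sub_mul {A₁ A₂ : ℤ} (hcop : IsCoprime A₁ A₂) (hA₁ : 0 < A₁) (N : ℤ) :
    ∃ τ, 0 ≤ τ ∧ τ < A₁ ∧ A₁ ∣ N - τ * A₂ := by
  obtain ⟨u, v, huv⟩ := hcop
  refine ⟨N * v % A₁, Int.emod_nonneg _ hA₁.ne', Int.emod_lt_of_pos _ hA₁,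
    N * u + N * v / A₁ * A₂, ?_⟩
  rw [Int.emod_def]
  linear_combination (-N) * huv

theorem mul_add_lt_mul_add_of_lt {b m s q r : ℤ} (hb : 0 ≤ b) (hs : s ≤ b) (hr : 1 ≤ r)
    (h : (b + 1) * m + s < (b + 1) * q + r) : b * m + s < b * q + r := by
  rcases lt_or_ge m q with hmq | hmq
  · nlinarith
  · linarith

section ShiftedGeometric

variable {A₁ A₂ A₃ b q r p : ℤ}

theorem exists_rep_of_weight (hA₃ : A₃ = (b + 1) * A₂ - b * A₁) (hA₁ : 0 < A₁)
    {N t z : ℤ} (hz : 0 ≤ z) (hzt : (b + 1) * z ≤ t) (hdvd : A₁ ∣ N - t * A₂)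
    (hlt : t * A₂ - b * z * A₁ < N + A₁) :
    ∃ v : Reps A₁ A₂ A₃ N, (v.1.2.2 : ℤ) = z := by
  obtain ⟨k, hk⟩ := hdvd
  have hx : 0 ≤ k + b * z := by
    by_contra! hneg
    nlinarith
  refine ⟨⟨((k + b * z).toNat, (t - (b + 1) * z).toNat, z.toNat), ?_⟩, Int.toNat_of_nonneg hz⟩
  simp only [Int.toNat_of_nonneg hx, Int.toNat_of_nonneg (sub_nonneg.2 hzt),
    Int.toNat_of_nonneg hz, hA₃]
  linear_combination -hk

theorem weight_eq_of_rep_frobenius (hA₃ : A₃ = (b + 1) * A₂ - b * A₁) (hA₁ : 0 < A₁)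
    (hb : 0 < b) (hbA : b * A₁ ≤ A₂) (hcop : IsCoprime A₁ A₂)
    (hqr : A₁ = (b + 1) * q + r) (hr : 0 ≤ r) (hrb : r ≤ b) (hpq : p ≤ q) {x y z : ℕ}
    (h : A₁ * x + A₂ * y + A₃ * z = (r - 1) * A₂ + (q + p) * A₃ - A₁) :
    (y : ℤ) + (b + 1) * z = (b + 1) * p - 1 := by
  set t : ℤ := y + (b + 1) * z
  set T : ℤ := r - 1 + (b + 1) * (q + p)
  have key : A₁ * (x + b * (q + p) + 1 - b * z) = (T - t) * A₂ := by
    rw [hA₃] at h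
    linear_combination h
  obtain ⟨j, hj⟩ := hcop.dvd_of_dvd_mul_right ⟨_, key.symm⟩
  have hx : (x : ℤ) + b * (q + p) + 1 - b * z = j * A₂ := by
    apply mul_left_cancel₀ hA₁.ne'
    rw [key, hj]; ring
  obtain rfl : j = 1 := by
    rcases le_or_gt j 0 with hj₀ | hj₀
    · have hA₂j : j * A₂ ≤ j * (b * A₁) := mul_le_mul_of_nonpos_left hbA hj₀
      have hbz : b * (q + p - A₁ * j) < b * z := by nlinarith
      have hz : q + p - A₁ * j + 1 ≤ z := by
        have := lt_of_mul_lt_mul_left hbz hb.le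
        omega
      have hz' : (b + 1) * (q + p - A₁ * j + 1) ≤ (b + 1) * z := by gcongr
      nlinarith [mul_nonneg hb.le (mul_nonneg hA₁.le (neg_nonneg.2 hj₀))]
    · by_contra hj₁
      have hA₁j : A₁ * 2 ≤ A₁ * j := by gcongr; omega
      have ht : (0 : ℤ) ≤ t := by positivity
      nlinarith
  linarith

theorem natCard_reps_frobenius_le (hA₃ : A₃ = (b + 1) * A₂ - b * A₁) (hA₁ : 0 < A₁)
    (hb : 0 < b) (hbA : b * A₁ ≤ A₂) (hcop : IsCoprime A₁ A₂)
    (hqr : A₁ = (b + 1) * q + r) (hr : 0 ≤ r) (hrb : r ≤ b) (hp : 0 ≤ p) (hpq : p ≤ q) :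
    (Nat.card (Reps A₁ A₂ A₃ ((r - 1) * A₂ + (q + p) * A₃ - A₁)) : ℤ) ≤ p := by
  have hweight (v : Reps A₁ A₂ A₃ ((r - 1) * A₂ + (q + p) * A₃ - A₁)) :=
    weight_eq_of_rep_frobenius hA₃ hA₁ hb hbA hcop hqr hr hrb hpq v.2
  refine natCard_le_of_injective (f := fun v ↦ (v.1.2.2 : ℤ)) ?_ hp fun v ↦ ?_
  · rintro ⟨⟨x, y, z⟩, hv⟩ ⟨⟨x', y', z'⟩, hv'⟩ hz
    obtain rfl : z = z' := by simpa using hz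
    obtain rfl : y = y' := by
      have := hweight ⟨_, hv⟩
      have := hweight ⟨_, hv'⟩
      simp only at *
      exact_mod_cast (by linarith : (y : ℤ) = y')
    obtain rfl : x = x' := by
      have : A₁ * (x : ℤ) = A₁ * x' := by simp only at hv hv'; linarith
      exact_mod_cast mul_left_cancel₀ hA₁.ne' this
    rfl
  · have := hweight v
    constructor
    · positivity
    · nlinarith

theorem weight_le_of_le (hbA : b * A₁ ≤ A₂) (hb : 0 ≤ b) (hA₁ : 0 ≤ A₁) {t z T w : ℤ}
    (ht : t ≤ T) (htz : t + w ≤ T + z) : t * A₂ - b * z * A₁ ≤ T * A₂ - b * w * A₁ := by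
  nlinarith [mul_le_mul_of_nonneg_left hbA (sub_nonneg.2 ht),
    mul_nonneg (mul_nonneg hb hA₁) (by linarith : 0 ≤ T + z - t - w)]

theorem exists_rep_of_frobenius_lt (hA₃ : A₃ = (b + 1) * A₂ - b * A₁) (hA₁ : 0 < A₁)
    (hb : 0 ≤ b) (hbA : b * A₁ ≤ A₂) {N t z : ℤ} (hN : (r - 1) * A₂ + (q + p) * A₃ - A₁ < N)
    (hz : 0 ≤ z) (hzt : (b + 1) * z ≤ t) (hdvd : A₁ ∣ N - t * A₂)
    (ht : t ≤ r - 1 + (b + 1) * (q + p)) (htz : t + (q + p) ≤ r - 1 + (b + 1) * (q + p) + z) :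
    ∃ v : Reps A₁ A₂ A₃ N, (v.1.2.2 : ℤ) = z := by
  refine exists_rep_of_weight hA₃ hA₁ hz hzt hdvd ?_
  have := weight_le_of_le hbA hb hA₁.le ht htz
  rw [hA₃] at hN
  linarith

theorem le_natCard_reps_of_frobenius_lt (hA₃ : A₃ = (b + 1) * A₂ - b * A₁) (hA₁ : 0 < A₁)
    (hb : 0 < b) (hbA : b * A₁ ≤ A₂) (hcop : IsCoprime A₁ A₂)
    (hqr : A₁ = (b + 1) * q + r) (hr : 1 ≤ r) (hpq : p ≤ q) {N : ℤ}
    (hN : (r - 1) * A₂ + (q + p) * A₃ - A₁ < N) :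
    p + 1 ≤ (Nat.card (Reps A₁ A₂ A₃ N) : ℤ) := by
  have hA₁₂ : A₁ ≤ A₂ := by nlinarith
  have : Finite (Reps A₁ A₂ A₃ N) := Reps.finite hA₁ (by omega) (by rw [hA₃]; nlinarith) N
  obtain ⟨τ, hτ₀, hτA, hτ⟩ := exists_emod_dvd_sub_mul hcop hA₁ N
  have hb₁ : 0 < b + 1 := by omega
  set m := τ / (b + 1)
  set s := τ % (b + 1)
  set M := (τ + A₁) / (b + 1)
  have hτ_eq : (b + 1) * m + s = τ := Int.mul_ediv_add_emod τ (b + 1)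
  have hs₀ : 0 ≤ s := Int.emod_nonneg _ hb₁.ne'
  have hsb : s ≤ b := by have := Int.emod_lt_of_pos τ hb₁; omega
  have hm₀ : 0 ≤ m := Int.ediv_nonneg hτ₀ hb₁.le
  have hms : b * m + s < b * q + r := mul_add_lt_mul_add_of_lt hb.le hsb hr (by linarith)
  have hM : M * (b + 1) ≤ τ + A₁ := Int.ediv_mul_le _ hb₁.ne'
  have hMq : m + q ≤ M := (Int.le_ediv_iff_mul_le hb₁).2 (by linarith)
  have hMs : m + q + s + 1 - b ≤ M :=
    (Int.le_ediv_iff_mul_le hb₁).2 (by nlinarith [mul_le_mul_of_nonneg_left hsb hb.le])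
  -- `z = m - j` with weight `τ` while `j ≤ m`, then `z = M + m + 1 - j` with weight `τ + A₁`,
  -- where `M` is the largest `z` that weight `τ + A₁` allows
  refine le_natCard_of_injOn (fun v ↦ (v.1.2.2 : ℤ))
    (g := fun j ↦ if j ≤ m then m - j else M + m + 1 - j) ?_ ?_
  · intro i hi j hj hij
    simp only [Set.mem_Icc] at hi hj
    simp only at hij
    split_ifs at hij <;> omega
  · rintro j ⟨hj₀, hjp⟩
    split_ifs with hjm
    · exact exists_rep_of_frobenius_lt hA₃ hA₁ hb.le hbA hN (by omega) (by nlinarith) hτ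
        (by nlinarith) (by nlinarith)
    · have hdvd : A₁ ∣ N - (τ + A₁) * A₂ := by
        rw [show N - (τ + A₁) * A₂ = N - τ * A₂ - A₁ * A₂ by ring]
        exact dvd_sub hτ (dvd_mul_right A₁ A₂)
      exact exists_rep_of_frobenius_lt hA₃ hA₁ hb.le hbA hN (by omega) (by nlinarith) hdvd
        (by nlinarith) (by nlinarith)

theorem isGreatest_natCard_reps_le (hA₃ : A₃ = (b + 1) * A₂ - b * A₁) (hA₁ : 0 < A₁)
    (hb : 0 < b) (hbA : b * A₁ ≤ A₂) (hcop : IsCoprime A₁ A₂)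
    (hqr : A₁ = (b + 1) * q + r) (hr : 1 ≤ r) (hrb : r ≤ b) (hp : 0 ≤ p) (hpq : p ≤ q) :
    IsGreatest {N | (Nat.card (Reps A₁ A₂ A₃ N) : ℤ) ≤ p}
      ((r - 1) * A₂ + (q + p) * A₃ - A₁) :=
  ⟨natCard_reps_frobenius_le hA₃ hA₁ hb hbA hcop hqr (by omega) hrb hp hpq,
    fun _ hN ↦ not_lt.1 fun hlt ↦
      (le_natCard_reps_of_frobenius_lt hA₃ hA₁ hb hbA hcop hqr hr hpq hlt).not_gt
        (Int.lt_add_one_iff.2 hN)⟩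

end ShiftedGeometric

theorem p_frobenius_shifted_geometric_general (a b c : ℤ) (n : ℕ)
    (hb : 2 ≤ b) (hc : 0 < c)
    (hpos : 0 < a * b ^ n - c)
    (hgcd : Int.gcd (Int.gcd (a * b ^ n - c) (a * b ^ (n + 1) - c))
      (a * b ^ (n + 2) - c) = 1)
    (q r : ℤ)
    (hq : q = (a * b ^ n - c) / (b + 1))
    (hr : r = (a * b ^ n - c) - (b + 1) * q)
    (hr1 : 1 ≤ r)
    (p : ℤ) (hp0 : 0 ≤ p) (hpq : p ≤ q) :
    IsGreatest {N : ℤ |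
        (Nat.card {v : ℕ × ℕ × ℕ //
          (a * b ^ n - c) * v.1 + (a * b ^ (n + 1) - c) * v.2.1
            + (a * b ^ (n + 2) - c) * v.2.2 = N} : ℤ) ≤ p}
      ((r - 1) * (a * b ^ (n + 1) - c) + (q + p) * (a * b ^ (n + 2) - c)
        - (a * b ^ n - c)) := by
  have hA₃ : a * b ^ (n + 2) - c
      = (b + 1) * (a * b ^ (n + 1) - c) - b * (a * b ^ n - c) := by ring
  have hbA : b * (a * b ^ n - c) ≤ a * b ^ (n + 1) - c := by
    nlinarith [show a * b ^ (n + 1) - c - b * (a * b ^ n - c) = (b - 1) * c by ring]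
  have hcop : IsCoprime (a * b ^ n - c) (a * b ^ (n + 1) - c) := by
    have hdvd : (Int.gcd (a * b ^ n - c) (a * b ^ (n + 1) - c) : ℤ) ∣ a * b ^ (n + 2) - c := by
      rw [hA₃]
      exact dvd_sub (dvd_mul_of_dvd_right (Int.gcd_dvd_right _ _) _)
        (dvd_mul_of_dvd_right (Int.gcd_dvd_left _ _) _)
    exact Int.isCoprime_iff_gcd_eq_one.2
      ((Nat.cast_injective (Int.gcd_eq_left (Int.natCast_nonneg _) hdvd)).symm.trans hgcd)
  have hrb : r ≤ b := by
    have : r = (a * b ^ n - c) % (b + 1) := by rw [hr, hq, Int.emod_def]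
    have := Int.emod_lt_of_pos (a * b ^ n - c) (by omega : (0 : ℤ) < b + 1)
    omega
  exact isGreatest_natCard_reps_le hA₃ hpos (by omega) hbA hcop (by linarith) hr1 hrb hp0 hpq

/-- Theorem 1, case `(b+1) ∤ (a b^n - c)`, `c > 0`: the `p`-Frobenius number of
`(a b^n - c, a b^{n+1} - c, a b^{n+2} - c)` is
`(r-1)(a b^{n+1} - c) + (q+p)(a b^{n+2} - c) - (a b^n - c)` for `0 ≤ p ≤ q`. -/
theorem p_frobenius_shifted_geometric (a b c : ℤ) (n : ℕ)
    (ha : 1 ≤ a) (hb : 2 ≤ b) (hc : 0 < c) (hn : 1 ≤ n)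
    (hpos : 0 < a * b ^ n - c)
    (hgcd : Int.gcd (Int.gcd (a * b ^ n - c) (a * b ^ (n + 1) - c))
      (a * b ^ (n + 2) - c) = 1)
    (q r : ℤ)
    (hq : q = (a * b ^ n - c) / (b + 1))
    (hr : r = (a * b ^ n - c) - (b + 1) * q)
    (hr1 : 1 ≤ r)
    (p : ℤ) (hp0 : 0 ≤ p) (hpq : p ≤ q) :
    IsGreatest {N : ℤ |
        (Nat.card {v : ℕ × ℕ × ℕ //
          (a * b ^ n - c) * v.1 + (a * b ^ (n + 1) - c) * v.2.1
            + (a * b ^ (n + 2) - c) * v.2.2 = N} : ℤ) ≤ p}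
      ((r - 1) * (a * b ^ (n + 1) - c) + (q + p) * (a * b ^ (n + 2) - c)
        - (a * b ^ n - c)) :=
  p_frobenius_shifted_geometric_general a b c n hb hc hpos hgcd q r hq hr hr1 p hp0 hpq
end

section
/- Let a ≥ 1, b ≥ 2, c > 0, n ≥ 1 be integers with gcd(a·b^n − c, a·b^{n+1} − c, a·b^{n+2} − c) = 1 and a·b^n − c > 0, and suppose (b+1) divides a·b^n − c; write q = (a·b^n − c)/(b+1). Then for each integer p with 0 ≤ p ≤ q, the p-Frobenius number of the triple equals b(a·b^{n+1} − c) + (q+p−1)(a·b^{n+2} − c) − (a·b^n − c). -/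
/-!
Since `(b + 1) A₂ = b A₁ + A₃`, a representation `x A₁ + y A₂ + z A₃ = N` can be rewritten as
`N = (x - b z) A₁ + t A₂` with weight `t = y + (b + 1) z`. As `A₂` is invertible modulo
`A₁ = (b + 1) q`, the weight is determined by `N` modulo `A₁`. For
`N₀ = b A₂ + (q + p - 1) A₃ - A₁` nonnegativity of `x` and `y` leaves only `t = (b + 1) p - 1`, so a
representation is determined by `z < p`. For `N > N₀`, write the least admissible weight as
`t₀ = m₀ + (b + 1) m₁` with `m₀ ≤ b`; the weights `t₀` and `t₀ + A₁`, with `z` taken from the top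
of `[0, m₁]` and of `[0, m₁ + q]`, already give `p + 1` representations.
-/

def representations (a₁ a₂ a₃ N : ℤ) : Set (ℕ × ℕ × ℕ) :=
  {v | a₁ * v.1 + a₂ * v.2.1 + a₃ * v.2.2 = N}

@[simp]
theorem mem_representations {a₁ a₂ a₃ N : ℤ} {x y z : ℕ} :
    (x, y, z) ∈ representations a₁ a₂ a₃ N ↔ a₁ * x + a₂ * y + a₃ * z = N :=
  Iff.rfl

theorem representations_finite {a₁ a₂ a₃ : ℤ} (h₁ : 0 < a₁) (h₂ : 0 < a₂) (h₃ : 0 < a₃)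
    (N : ℤ) : (representations a₁ a₂ a₃ N).Finite := by
  refine (Set.finite_Iic (N.toNat, N.toNat, N.toNat)).subset ?_
  rintro ⟨x, y, z⟩ (hv : a₁ * x + a₂ * y + a₃ * z = N)
  have : (x : ℤ) ≤ N ∧ (y : ℤ) ≤ N ∧ (z : ℤ) ≤ N := by refine ⟨?_, ?_, ?_⟩ <;> nlinarith
  simp only [Set.mem_Iic, Prod.mk_le_mk]
  omega

theorem eq_of_mem_representations {a₁ a₂ a₃ N : ℤ} (h₁ : a₁ ≠ 0) {v w : ℕ × ℕ × ℕ}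
    (hv : v ∈ representations a₁ a₂ a₃ N) (hw : w ∈ representations a₁ a₂ a₃ N)
    (h : v.2 = w.2) : v = w := by
  obtain ⟨x, y, z⟩ := v
  obtain ⟨x', y', z'⟩ := w
  obtain ⟨rfl, rfl⟩ := Prod.ext_iff.1 h
  rw [mem_representations] at hv hw
  have : (x : ℤ) = x' := mul_left_cancel₀ h₁ (by linarith)
  simp_all

theorem exists_mem_representations {a₁ a₂ a₃ N : ℤ} (h₁ : 0 < a₁) {y z : ℕ}
    (hdvd : a₁ ∣ N - (a₂ * y + a₃ * z)) (hlt : a₂ * y + a₃ * z < N + a₁) :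
    ∃ x : ℕ, (x, y, z) ∈ representations a₁ a₂ a₃ N := by
  obtain ⟨k, hk⟩ := hdvd
  have hk0 : 0 ≤ k := by nlinarith
  lift k to ℕ using hk0
  exact ⟨k, by rw [mem_representations]; linarith⟩

theorem Int.isCoprime_of_gcd_gcd_eq_one {a₁ a₂ a₃ k l : ℤ}
    (h : Int.gcd (Int.gcd a₁ a₂) a₃ = 1) (h₃ : a₃ = k * a₁ + l * a₂) : IsCoprime a₁ a₂ := by
  have hdvd : (Int.gcd a₁ a₂ : ℤ) ∣ a₃ :=
    h₃ ▸ dvd_add (Int.gcd_dvd_left ..|>.mul_left k) (Int.gcd_dvd_right ..|>.mul_left l)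
  rw [Int.gcd_eq_natAbs_left hdvd, Int.natAbs_natCast] at h
  exact Int.isCoprime_iff_gcd_eq_one.2 h

theorem IsCoprime.exists_natCast_lt_dvd_sub_mul {a b : ℤ} (h : IsCoprime a b) (ha : 0 < a)
    (N : ℤ) : ∃ t : ℕ, (t : ℤ) < a ∧ a ∣ N - t * b := by
  obtain ⟨u, v, huv⟩ := h
  lift v * N % a to ℕ using Int.emod_nonneg _ ha.ne' with t ht
  refine ⟨t, ht ▸ Int.emod_lt_of_pos _ ha, N * u + v * N / a * b, ?_⟩
  linear_combination (-N) * huv - b * ht.trans (Int.emod_def _ _)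

/-- The properties of `A₁, A₂, A₃ = a bⁿ - c, a bⁿ⁺¹ - c, a bⁿ⁺² - c` with `A₁ = (b + 1) q`
that the argument needs. -/
structure ShiftedGeometricTriple (A₁ A₂ A₃ : ℤ) (b q : ℕ) : Prop where
  eq_mul : A₁ = (b + 1) * q
  rel : (b + 1) * A₂ = b * A₁ + A₃
  isCoprime : IsCoprime A₁ A₂
  q_pos : 0 < q
  pos₂ : 0 < A₂
  mul_le : b * A₁ ≤ A₃

namespace ShiftedGeometricTriple

variable {A₁ A₂ A₃ : ℤ} {b q p : ℕ}

theorem pos₁ (h : ShiftedGeometricTriple A₁ A₂ A₃ b q) : 0 < A₁ := by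
  rw [h.eq_mul]
  exact mul_pos (by positivity) (by exact_mod_cast h.q_pos)

theorem pos₃ (h : ShiftedGeometricTriple A₁ A₂ A₃ b q) : 0 < A₃ := by
  rcases b.eq_zero_or_pos with rfl | hb
  · have hrel := h.rel
    push_cast at hrel
    linarith [h.pos₂]
  · exact h.mul_le.trans_lt' (mul_pos (by exact_mod_cast hb) h.pos₁)

theorem add_mul_eq_of_mem_representations (h : ShiftedGeometricTriple A₁ A₂ A₃ b q)
    (hpq : p ≤ q) {x y z : ℕ}
    (hv : (x, y, z) ∈ representations A₁ A₂ A₃ (b * A₂ + (q + p - 1) * A₃ - A₁)) :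
    y + (b + 1) * z + 1 = (b + 1) * p := by
  rw [mem_representations] at hv
  obtain ⟨hA₁, hrel, hcop, hq, hA₂, hA₃⟩ := id h
  have hA₁pos := h.pos₁
  have hA₂bq : (b : ℤ) * q < A₂ := by nlinarith
  have key : ((b + 1) * (q + p) - 1 - (y + (b + 1) * z)) * A₂
      = A₁ * (x - b * z + b * (q + p - 1) + 1) := by
    linear_combination -hv - (z - (q + p - 1)) * hrel
  obtain ⟨j, hj⟩ := hcop.dvd_of_dvd_mul_right ⟨_, key⟩
  have hx : (x : ℤ) = b * z - b * (q + p - 1) - 1 + j * A₂ := by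
    rw [hj, mul_assoc] at key
    linarith [mul_left_cancel₀ hA₁pos.ne' key]
  -- `A₁ * j ≤ (b + 1) * (q + p) - 1 < 2 * A₁`
  have hj_le : j ≤ 1 := by
    by_contra! hj₂
    nlinarith
  -- if `j ≤ 0`: `y ≥ 0` gives `z < q + p - q * j`, then `hx` gives `x ≤ j * (A₂ - b * q) - 1 < 0`
  have hj_ge : 1 ≤ j := by
    by_contra! hj₀
    have hz : (z : ℤ) < q + p - q * j := by
      by_contra! hz
      nlinarith
    nlinarith
  obtain rfl : j = 1 := le_antisymm hj_le hj_ge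
  have : ((y + (b + 1) * z + 1 : ℕ) : ℤ) = ((b + 1) * p : ℕ) := by push_cast; linarith
  exact_mod_cast this

theorem ncard_representations_le (h : ShiftedGeometricTriple A₁ A₂ A₃ b q) (hpq : p ≤ q) :
    (representations A₁ A₂ A₃ (b * A₂ + (q + p - 1) * A₃ - A₁)).ncard ≤ p := by
  calc _ ≤ (Set.Iio p).ncard := Set.ncard_le_ncard_of_injOn (fun v => v.2.2) ?_ ?_
    _ = p := Set.ncard_Iio_nat p
  · rintro ⟨x, y, z⟩ hv
    have := h.add_mul_eq_of_mem_representations hpq hv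
    simp only [Set.mem_Iio]
    nlinarith
  · rintro ⟨x, y, z⟩ hv ⟨x', y', z'⟩ hw (rfl : z = z')
    refine eq_of_mem_representations h.pos₁.ne' hv hw ?_
    have := h.add_mul_eq_of_mem_representations hpq hv
    have := h.add_mul_eq_of_mem_representations hpq hw
    simp only [Prod.mk.injEq, and_true]
    linarith

theorem exists_mem_representations_of_lt (h : ShiftedGeometricTriple A₁ A₂ A₃ b q)
    {N : ℤ} {m₀ T j : ℕ} (hN : b * A₂ + (q + p - 1) * A₃ - A₁ < N) (hm₀ : m₀ ≤ b)
    (hjT : j ≤ T) (hTj : T + j < q + p) (hdvd : A₁ ∣ N - (m₀ + (b + 1) * T) * A₂) :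
    ∃ x : ℕ, (x, m₀ + (b + 1) * j, T - j) ∈ representations A₁ A₂ A₃ N := by
  have hcost : A₂ * ((m₀ + (b + 1) * j : ℕ) : ℤ) + A₃ * ((T - j : ℕ) : ℤ)
      = (m₀ + (b + 1) * T) * A₂ - A₁ * (b * (T - j)) := by
    push_cast [Nat.cast_sub hjT]
    linear_combination -(T - j) * h.rel
  refine exists_mem_representations h.pos₁ ?_ ?_ <;> rw [hcost]
  · simpa [sub_add] using dvd_add hdvd (dvd_mul_right A₁ _)
  · have hTj' : (T : ℤ) + j + 1 ≤ q + p := by exact_mod_cast hTj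
    have hm₀' : (m₀ : ℤ) ≤ b := by exact_mod_cast hm₀
    nlinarith [h.rel, mul_nonneg (sub_nonneg.2 hm₀') h.pos₂.le,
      mul_nonneg (sub_nonneg.2 hTj') h.pos₃.le,
      mul_nonneg (Nat.cast_nonneg j) (sub_nonneg.2 h.mul_le)]

theorem lt_ncard_representations (h : ShiftedGeometricTriple A₁ A₂ A₃ b q) (hpq : p ≤ q)
    {N : ℤ} (hN : b * A₂ + (q + p - 1) * A₃ - A₁ < N) :
    p < (representations A₁ A₂ A₃ N).ncard := by
  obtain ⟨t, ht, hdvd⟩ := h.isCoprime.exists_natCast_lt_dvd_sub_mul h.pos₁ N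
  obtain ⟨m₀, m₁, hm₀, rfl⟩ : ∃ m₀ m₁, m₀ ≤ b ∧ t = m₀ + (b + 1) * m₁ :=
    ⟨t % (b + 1), t / (b + 1), Nat.le_of_lt_succ (Nat.mod_lt _ b.succ_pos),
      (Nat.mod_add_div _ _).symm⟩
  have hm₁ : m₁ < q := by
    rw [h.eq_mul] at ht
    push_cast at ht
    refine Nat.lt_of_mul_lt_mul_left (a := b + 1) ?_
    exact_mod_cast (by linarith : ((b : ℤ) + 1) * m₁ < (b + 1) * q)
  -- the `i`-th representation has weight `m₀ + (b + 1) * T i`, congruent to `t` modulo `A₁`,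
  -- and third coordinate `T i - j i`: these are `m₁, m₁ - 1, …` and then `m₁ + q, m₁ + q - 1, …`
  let T : ℕ → ℕ := fun i => if i ≤ m₁ then m₁ else m₁ + q
  let j : ℕ → ℕ := fun i => if i ≤ m₁ then i else i - (m₁ + 1)
  have hex : ∀ i ∈ Set.Iic p, ∃ x : ℕ,
      (x, m₀ + (b + 1) * j i, T i - j i) ∈ representations A₁ A₂ A₃ N := by
    intro i (hi : i ≤ p)
    have hjT : j i ≤ T i := by simp only [T, j]; split_ifs <;> omega
    have hTj : T i + j i < q + p := by simp only [T, j]; split_ifs <;> omega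
    refine h.exists_mem_representations_of_lt hN hm₀ hjT hTj ?_
    by_cases hi₁ : i ≤ m₁
    · simpa [T, hi₁] using hdvd
    · have : (m₀ + (b + 1) * (m₁ + q) : ℤ) = ((m₀ + (b + 1) * m₁ : ℕ) : ℤ) + A₁ := by
        rw [h.eq_mul]; push_cast; ring
      simp only [T, hi₁, if_false]
      push_cast
      rw [this, add_mul, ← sub_sub]
      exact dvd_sub hdvd (dvd_mul_right _ _)
  choose! x hx using hex
  calc p < (Set.Iic p).ncard := by simp
    _ ≤ _ := Set.ncard_le_ncard_of_injOn (fun i => (x i, m₀ + (b + 1) * j i, T i - j i)) hx ?_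
      (representations_finite h.pos₁ h.pos₂ h.pos₃ N)
  intro i (hi : i ≤ p) i' (hi' : i' ≤ p) hii'
  simp only [Prod.mk.injEq, T, j] at hii'
  split_ifs at hii' <;> omega

end ShiftedGeometricTriple

theorem p_frobenius_shifted_geometric_div_general (a b c : ℤ) (n : ℕ)
    (hb : 2 ≤ b) (hc : 0 < c)
    (hpos : 0 < a * b ^ n - c)
    (hgcd : Int.gcd (Int.gcd (a * b ^ n - c) (a * b ^ (n + 1) - c))
      (a * b ^ (n + 2) - c) = 1)
    (hdvd : (b + 1) ∣ (a * b ^ n - c))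
    (q : ℤ) (hq : q = (a * b ^ n - c) / (b + 1))
    (p : ℤ) (hp0 : 0 ≤ p) (hpq : p ≤ q) :
    IsGreatest {N : ℤ |
        (Nat.card {v : ℕ × ℕ × ℕ //
          (a * b ^ n - c) * v.1 + (a * b ^ (n + 1) - c) * v.2.1
            + (a * b ^ (n + 2) - c) * v.2.2 = N} : ℤ) ≤ p}
      (b * (a * b ^ (n + 1) - c) + (q + p - 1) * (a * b ^ (n + 2) - c)
        - (a * b ^ n - c)) := by
  lift b to ℕ using by omega
  have hA₁ : a * b ^ n - c = (b + 1) * q := by rw [hq, Int.mul_ediv_cancel' hdvd]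
  have hrel : (b + 1) * (a * b ^ (n + 1) - c) = b * (a * b ^ n - c) + (a * b ^ (n + 2) - c) := by
    ring
  have hq₀ : 0 < q := pos_of_mul_pos_right (hA₁ ▸ hpos) (by positivity)
  lift q to ℕ using hq₀.le
  lift p to ℕ using hp0
  have h : ShiftedGeometricTriple (a * b ^ n - c) (a * b ^ (n + 1) - c) (a * b ^ (n + 2) - c) b q :=
    { eq_mul := hA₁
      rel := hrel
      isCoprime :=
        Int.isCoprime_of_gcd_gcd_eq_one (k := -b) (l := b + 1) hgcd (by linear_combination hrel)
      q_pos := by exact_mod_cast hq₀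
      pos₂ := by nlinarith [show a * b ^ (n + 1) - c = b * (a * b ^ n - c) + (b - 1) * c by ring]
      mul_le := by
        nlinarith [show a * b ^ (n + 2) - c - b * (a * b ^ n - c)
          = (b ^ 2 - b) * (a * b ^ n - c) + (b ^ 2 - 1) * c by ring,
          mul_pos (by nlinarith : (0 : ℤ) < b ^ 2 - b) hpos,
          mul_pos (by nlinarith : (0 : ℤ) < b ^ 2 - 1) hc] }
  have hpq' : p ≤ q := by exact_mod_cast hpq
  refine ⟨by exact_mod_cast h.ncard_representations_le hpq', fun N hN => not_lt.1 fun hlt => ?_⟩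
  exact not_le.2 (h.lt_ncard_representations hpq' hlt) (by exact_mod_cast hN)

/-- Theorem 1, case `(b+1) ∣ (a b^n - c)`: with `q = (a b^n - c)/(b+1)`, for
`0 ≤ p ≤ q` the `p`-Frobenius number of the triple is
`b (a b^{n+1} - c) + (q+p-1)(a b^{n+2} - c) - (a b^n - c)`. -/
theorem p_frobenius_shifted_geometric_div (a b c : ℤ) (n : ℕ)
    (ha : 1 ≤ a) (hb : 2 ≤ b) (hc : 0 < c) (hn : 1 ≤ n)
    (hpos : 0 < a * b ^ n - c)
    (hgcd : Int.gcd (Int.gcd (a * b ^ n - c) (a * b ^ (n + 1) - c))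
      (a * b ^ (n + 2) - c) = 1)
    (hdvd : (b + 1) ∣ (a * b ^ n - c))
    (q : ℤ) (hq : q = (a * b ^ n - c) / (b + 1))
    (p : ℤ) (hp0 : 0 ≤ p) (hpq : p ≤ q) :
    IsGreatest {N : ℤ |
        (Nat.card {v : ℕ × ℕ × ℕ //
          (a * b ^ n - c) * v.1 + (a * b ^ (n + 1) - c) * v.2.1
            + (a * b ^ (n + 2) - c) * v.2.2 = N} : ℤ) ≤ p}
      (b * (a * b ^ (n + 1) - c) + (q + p - 1) * (a * b ^ (n + 2) - c)
        - (a * b ^ n - c)) :=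
  p_frobenius_shifted_geometric_div_general a b c n hb hc hpos hgcd hdvd q hq p hp0 hpq
end

section
/- Let b = 3, a = 4, c = −1, n ≥ 1, so the triple is (4·3^n + 1, 4·3^{n+1} + 1, 4·3^{n+2} + 1). Then for 0 ≤ p ≤ 3^n, the p-Frobenius number of this triple equals (4·3^{n+2} + 1)p + 4·3^{2n+2} − 3^{n+1} + 1. In particular, for n = 1 it equals 109p + 316. -/
open Function

private lemma thabit_finite (A1 A2 A3 : ℤ) (h1 : 1 ≤ A1) (h2 : 1 ≤ A2) (h3 : 1 ≤ A3) (N : ℤ) :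
    Finite {v : ℕ × ℕ × ℕ // A1 * v.1 + A2 * v.2.1 + A3 * v.2.2 = N} := by
  rcases lt_or_ge N 0 with hN | hN
  · have he : IsEmpty {v : ℕ × ℕ × ℕ // A1 * v.1 + A2 * v.2.1 + A3 * v.2.2 = N} := by
      refine ⟨?_⟩
      rintro ⟨⟨x, y, z⟩, hv⟩
      simp only at hv
      nlinarith [mul_nonneg (by linarith : (0:ℤ) ≤ A1) (Int.ofNat_nonneg x),
        mul_nonneg (by linarith : (0:ℤ) ≤ A2) (Int.ofNat_nonneg y),
        mul_nonneg (by linarith : (0:ℤ) ≤ A3) (Int.ofNat_nonneg z)]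
    exact Finite.of_injective (fun v => (he.elim v : Fin 0)) (fun v w _ => he.elim v)
  · have bound : ∀ v : {v : ℕ × ℕ × ℕ // A1 * v.1 + A2 * v.2.1 + A3 * v.2.2 = N},
        v.1.1 < N.toNat + 1 ∧ v.1.2.1 < N.toNat + 1 ∧ v.1.2.2 < N.toNat + 1 := by
      rintro ⟨⟨x, y, z⟩, hv⟩
      simp only at hv ⊢
      have hx : (x : ℤ) ≤ N := by nlinarith [mul_nonneg (by linarith : (0:ℤ) ≤ A2) (Int.ofNat_nonneg y), mul_nonneg (by linarith : (0:ℤ) ≤ A3) (Int.ofNat_nonneg z), mul_nonneg (by linarith : (0:ℤ) ≤ A1 - 1) (Int.ofNat_nonneg x)]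
      have hy : (y : ℤ) ≤ N := by nlinarith [mul_nonneg (by linarith : (0:ℤ) ≤ A1) (Int.ofNat_nonneg x), mul_nonneg (by linarith : (0:ℤ) ≤ A3) (Int.ofNat_nonneg z), mul_nonneg (by linarith : (0:ℤ) ≤ A2 - 1) (Int.ofNat_nonneg y)]
      have hz : (z : ℤ) ≤ N := by nlinarith [mul_nonneg (by linarith : (0:ℤ) ≤ A1) (Int.ofNat_nonneg x), mul_nonneg (by linarith : (0:ℤ) ≤ A2) (Int.ofNat_nonneg y), mul_nonneg (by linarith : (0:ℤ) ≤ A3 - 1) (Int.ofNat_nonneg z)]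
      refine ⟨?_, ?_, ?_⟩ <;> omega
    exact Finite.of_injective
      (fun v => ((⟨v.1.1, (bound v).1⟩ : Fin (N.toNat + 1)), (⟨v.1.2.1, (bound v).2.1⟩ : Fin (N.toNat + 1)), (⟨v.1.2.2, (bound v).2.2⟩ : Fin (N.toNat + 1))))
      (by rintro ⟨⟨x, y, z⟩, hv⟩ ⟨⟨x', y', z'⟩, hv'⟩ h
          simp only [Prod.mk.injEq, Fin.mk.injEq] at h
          exact Subtype.ext (by simp [h.1, h.2.1, h.2.2]))

private lemma thabit_card_ge (A1 A2 A3 : ℤ) (h1 : 1 ≤ A1) (h2 : 1 ≤ A2) (h3 : 1 ≤ A3)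
    (N : ℤ) (k : ℕ) (g : Fin k → ℕ × ℕ)
    (hinj : Injective g)
    (hge : ∀ i, 0 ≤ N - (A2 * (g i).1 + A3 * (g i).2))
    (hdvd : ∀ i, A1 ∣ N - (A2 * (g i).1 + A3 * (g i).2)) :
    k ≤ Nat.card {v : ℕ × ℕ × ℕ // A1 * v.1 + A2 * v.2.1 + A3 * v.2.2 = N} := by
  have hfin : Finite {v : ℕ × ℕ × ℕ // A1 * v.1 + A2 * v.2.1 + A3 * v.2.2 = N} :=
    thabit_finite A1 A2 A3 h1 h2 h3 N
  have hsol : ∀ i : Fin k,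
      A1 * ((((N - (A2 * (g i).1 + A3 * (g i).2)) / A1).toNat : ℕ) : ℤ)
        + A2 * (g i).1 + A3 * (g i).2 = N := by
    intro i
    have hq : 0 ≤ (N - (A2 * (g i).1 + A3 * (g i).2)) / A1 :=
      Int.ediv_nonneg (hge i) (by linarith)
    rw [Int.toNat_of_nonneg hq, Int.mul_ediv_cancel' (hdvd i)]
    ring
  have hle := Nat.card_le_card_of_injective
    (α := Fin k)
    (fun i => (⟨(((N - (A2 * (g i).1 + A3 * (g i).2)) / A1).toNat, (g i).1, (g i).2),
        hsol i⟩ : {v : ℕ × ℕ × ℕ // A1 * v.1 + A2 * v.2.1 + A3 * v.2.2 = N}))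
    (by intro i j h
        apply hinj
        have h2 : ((g i).1, (g i).2) = ((g j).1, (g j).2) :=
          congrArg (fun v => v.1.2) h
        simpa using h2)
  simpa using hle
-- membership lemma
private lemma thabit_memb (m p : ℕ) (hm : 3 ≤ m) (hp : p ≤ m) :
    Nat.card {v : ℕ × ℕ × ℕ //
      (4 * (m:ℤ) + 1) * v.1 + (12 * m + 1) * v.2.1 + (36 * m + 1) * v.2.2
        = (36 * m + 1) * p + 36 * m ^ 2 - 3 * m + 1} ≤ p := by
  set Ns : ℤ := (36 * m + 1) * p + 36 * m ^ 2 - 3 * m + 1 with hNs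
  -- key structural fact about any solution
  have key : ∀ x y z : ℕ,
      (4 * (m:ℤ) + 1) * x + (12 * m + 1) * y + (36 * m + 1) * z = Ns →
      (y:ℤ) + 4 * z = 4 * p - 2 := by
    intro x y z hv
    have hdvd2 : (4 * (m:ℤ) + 1) ∣ (2 * ((y:ℤ) + 4 * z) - (8 * p - 4)) := by
      have e1 : 2 * ((y:ℤ) + 4 * z) - (8 * p - 4)
          = (Ns + 2 * ((y:ℤ) + 4 * z)) - (Ns + (8 * (p:ℤ) - 4)) := by ring
      rw [e1]
      refine dvd_sub ⟨(x : ℤ) + 3 * y + 9 * z, ?_⟩ ⟨9 * (p:ℤ) + 9 * m - 3, ?_⟩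
      · rw [← hv]; ring
      · rw [hNs]; ring
    have hcop : IsCoprime (4 * (m:ℤ) + 1) 2 := ⟨-1, 2 * m + 1, by ring⟩
    have hdvd : (4 * (m:ℤ) + 1) ∣ (((y:ℤ) + 4 * z) - (4 * p - 2)) := by
      refine hcop.dvd_of_dvd_mul_right ?_
      have : (((y:ℤ) + 4 * z) - (4 * p - 2)) * 2 = 2 * ((y:ℤ) + 4 * z) - (8 * p - 4) := by ring
      rw [this]; exact hdvd2
    obtain ⟨k, hk⟩ := hdvd
    -- k ≥ 0
    have hk0 : 0 ≤ k := by nlinarith [Int.ofNat_nonneg y, Int.ofNat_nonneg z, Int.ofNat_nonneg p]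
    -- value bound: 4 * value ≤ 4 * Ns, identity gives k*(36m+1) + 3y ≤ 36m+6
    have hval : k * (36 * (m:ℤ) + 1) + 3 * y ≤ 36 * m + 6 := by
      have hx0 : 0 ≤ (4 * (m:ℤ) + 1) * x :=
        mul_nonneg (by positivity) (Int.ofNat_nonneg x)
      have h4 : ((y:ℤ) + 4 * z) * (36 * m + 1) + 3 * (4 * m + 1) * y
          = 4 * ((12 * (m:ℤ) + 1) * y + (36 * m + 1) * z) := by ring
      -- value ≤ Ns
      have hvle : (12 * (m:ℤ) + 1) * y + (36 * m + 1) * z ≤ Ns := by nlinarith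
      have hs : ((y:ℤ) + 4 * z) = (4 * p - 2) + (4 * m + 1) * k := by linarith [hk]
      have expand : ((4 * (p:ℤ) - 2) + (4 * m + 1) * k) * (36 * m + 1) + 3 * (4 * m + 1) * y
          ≤ 4 * Ns := by
        rw [← hs, h4]; linarith
      have hNs4 : 4 * Ns = 4 * (36 * (m:ℤ) + 1) * p + 144 * m ^ 2 - 12 * m + 4 := by
        rw [hNs]; ring
      nlinarith [expand, hNs4]
    -- rule out k ≥ 2
    have hk2 : k ≤ 1 := by nlinarith [Int.ofNat_nonneg y]
    -- rule out k = 1 : y ≤ 1 but 4 ∣ y + 1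
    have hk1 : k ≠ 1 := by
      intro h1
      subst h1
      have hy1 : (y:ℤ) ≤ 1 := by linarith
      have hy4 : (4:ℤ) ∣ ((y:ℤ) + 1) := by
        refine ⟨(p:ℤ) + m - z, ?_⟩
        linarith [hk]
      omega
    have hk' : k = 0 := by omega
    rw [hk'] at hk
    linarith [hk]
  -- now the injection into Fin p
  have hzlt : ∀ v : {v : ℕ × ℕ × ℕ //
      (4 * (m:ℤ) + 1) * v.1 + (12 * m + 1) * v.2.1 + (36 * m + 1) * v.2.2 = Ns},
      v.1.2.2 < p := by
    rintro ⟨⟨x, y, z⟩, hv⟩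
    have := key x y z hv
    simp only
    omega
  have hle := Nat.card_le_card_of_injective
    (fun v : {v : ℕ × ℕ × ℕ //
      (4 * (m:ℤ) + 1) * v.1 + (12 * m + 1) * v.2.1 + (36 * m + 1) * v.2.2 = Ns} =>
      (⟨v.1.2.2, hzlt v⟩ : Fin p))
    (by rintro ⟨⟨x, y, z⟩, hv⟩ ⟨⟨x', y', z'⟩, hv'⟩ h
        simp only [Fin.mk.injEq] at h
        have e1 := key x y z hv
        have e2 := key x' y' z' hv'
        have hz : z = z' := h
        have hy : y = y' := by omega
        subst hz; subst hy
        have hx : ((x:ℤ)) = x' := by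
          have : (4 * (m:ℤ) + 1) * x = (4 * (m:ℤ) + 1) * x' := by linarith [hv, hv']
          exact mul_left_cancel₀ (by positivity) this
        have hx' : x = x' := by exact_mod_cast hx
        subst hx'
        rfl)
  simpa using hle
private lemma thabit_nonneg_of_dvd (A w : ℤ) (hA : 0 < A) (hdvd : A ∣ w) (hgt : -A < w) :
    0 ≤ w := by
  obtain ⟨t, rfl⟩ := hdvd
  rcases le_or_gt 0 t with h | h
  · exact mul_nonneg hA.le h
  · exfalso
    have ht : t ≤ -1 := by omega
    have : A * t ≤ A * (-1) := by
      exact mul_le_mul_of_nonneg_left ht hA.le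
    linarith

set_option maxHeartbeats 3200000 in
private lemma thabit_ub (m p : ℕ) (hm : 3 ≤ m) (hp : p ≤ m) (N : ℤ)
    (hN : (36 * (m:ℤ) + 1) * p + 36 * m ^ 2 - 3 * m + 1 < N) :
    p + 1 ≤ Nat.card {v : ℕ × ℕ × ℕ //
      (4 * (m:ℤ) + 1) * v.1 + (12 * m + 1) * v.2.1 + (36 * m + 1) * v.2.2 = N} := by
  have hA1 : (0:ℤ) < 4 * m + 1 := by positivity
  have hm0 : (0:ℤ) ≤ (m:ℤ) := Int.ofNat_nonneg m
  have hmZ : (3:ℤ) ≤ (m:ℤ) := by exact_mod_cast hm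
  have hpZ : ((p:ℤ)) ≤ (m:ℤ) := by exact_mod_cast hp
  -- the residue class parameter c
  obtain ⟨c, hcm, hNc⟩ : ∃ c : ℕ, c ≤ 4 * m ∧ (4 * (m:ℤ) + 1) ∣ (N + 2 * c) := by
    have hcz0 : 0 ≤ ((2 * (m:ℤ) + 1) * (-N)) % (4 * m + 1) :=
      Int.emod_nonneg _ (by positivity)
    have hczlt : ((2 * (m:ℤ) + 1) * (-N)) % (4 * m + 1) < 4 * m + 1 :=
      Int.emod_lt_of_pos _ hA1
    refine ⟨(((2 * (m:ℤ) + 1) * (-N)) % (4 * m + 1)).toNat, by omega, ?_⟩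
    rw [Int.toNat_of_nonneg hcz0]
    refine ⟨-N - 2 * (((2 * m + 1) * (-N)) / (4 * m + 1)), ?_⟩
    rw [Int.emod_def]; ring
  obtain ⟨q, r, hc4, hr4⟩ : ∃ q r : ℕ, c = 4 * q + r ∧ r < 4 :=
    ⟨c / 4, c % 4, by omega, by omega⟩
  rcases le_or_gt p q with hpq | hqp
  · -- Case A : p ≤ q, all pairs in block 0
    set g : Fin (p + 1) → ℕ × ℕ := fun i => (4 * (p - i.val) + r, q - p + i.val) with hg
    have hyz : ∀ i : Fin (p + 1), ((g i).1 : ℤ) + 4 * (g i).2 = c := by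
      intro i
      have hi : i.val ≤ p := by omega
      simp only [hg]
      omega
    have hub : ∀ i : Fin (p + 1),
        (12 * (m:ℤ) + 1) * (g i).1 + (36 * m + 1) * (g i).2
          ≤ (36 * (m:ℤ) + 1) * p + 36 * m ^ 2 - 3 * m + 1 + (4 * m + 1) := by
      intro i
      have hi : i.val ≤ p := by omega
      have hy : ((g i).1 : ℤ) = 4 * ((p:ℤ) - i.val) + r := by simp only [hg]; omega
      have hz : ((g i).2 : ℤ) = (q:ℤ) - p + i.val := by simp only [hg]; omega
      rw [hy, hz]
      have t2 : (0:ℤ) ≤ (12 * m + 3) * i.val := by positivity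
      rcases Nat.eq_zero_or_pos r with hr0 | hr1
      · have hqm : (q:ℤ) ≤ m := by omega
        have t3 : (0:ℤ) ≤ (36 * m + 1) * ((m:ℤ) - q) := by
          apply mul_nonneg (by positivity); linarith
        have t1 : (0:ℤ) ≤ (24 * m - 2) * p := by
          apply mul_nonneg (by linarith) (by positivity)
        have hrz : (r:ℤ) = 0 := by exact_mod_cast hr0
        nlinarith [t1, t2, t3]
      · have hqm : (q:ℤ) ≤ (m:ℤ) - 1 := by omega
        have t3 : (0:ℤ) ≤ (36 * m + 1) * ((m:ℤ) - 1 - q) := by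
          apply mul_nonneg (by positivity); linarith
        have t4 : (0:ℤ) ≤ (12 * m + 1) * (3 - (r:ℤ)) := by
          apply mul_nonneg (by positivity); omega
        have t1 : (0:ℤ) ≤ (24 * m - 2) * p := by
          apply mul_nonneg (by linarith) (by positivity)
        nlinarith [t1, t2, t3, t4]
    have hdvd : ∀ i : Fin (p + 1),
        (4 * (m:ℤ) + 1) ∣ N - ((12 * m + 1) * (g i).1 + (36 * m + 1) * (g i).2) := by
      intro i
      have h1 : N - ((12 * (m:ℤ) + 1) * (g i).1 + (36 * m + 1) * (g i).2)
          = (N + 2 * c) - (4 * m + 1) * (3 * ((g i).1 : ℤ) + 9 * (g i).2) := by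
        linear_combination 2 * (hyz i)
      rw [h1]
      exact dvd_sub hNc ⟨3 * ((g i).1 : ℤ) + 9 * (g i).2, rfl⟩
    refine thabit_card_ge _ _ _ (by linarith) (by linarith) (by linarith) N (p+1) g
      ?_ ?_ hdvd
    · intro i j h
      have h2 : q - p + i.val = q - p + j.val := congrArg Prod.snd h
      exact Fin.ext (by omega)
    · intro i
      refine thabit_nonneg_of_dvd _ _ hA1 (hdvd i) ?_
      have := hub i
      linarith
  · -- Case B : q < p, blocks 0 and 1
    obtain ⟨e, rr, hecase⟩ : ∃ e rr : ℕ,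
        (e = 0 ∧ rr = r + 1 ∧ r ≤ 2) ∨ (e = 1 ∧ rr = 0 ∧ r = 3) := by
      rcases Nat.lt_or_ge r 3 with h | h
      · exact ⟨0, r + 1, Or.inl ⟨rfl, rfl, by omega⟩⟩
      · exact ⟨1, 0, Or.inr ⟨rfl, rfl, by omega⟩⟩
    set Q : ℕ := q + m + e with hQ
    have herr : rr + 4 * e = r + 1 ∧ e ≤ 1 := by
      rcases hecase with ⟨h1, h2, h3⟩ | ⟨h1, h2, h3⟩ <;> omega
    set g : Fin (p + 1) → ℕ × ℕ := fun i =>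
      if i.val ≤ q then (4 * (q - i.val) + r, i.val)
      else (rr + 4 * (i.val - q - 1), Q - (i.val - q - 1)) with hg
    have hyz : ∀ i : Fin (p + 1),
        ((g i).1 : ℤ) + 4 * (g i).2 = c ∨ ((g i).1 : ℤ) + 4 * (g i).2 = c + (4 * m + 1) := by
      intro i
      have hi : i.val ≤ p := by omega
      by_cases hiq : i.val ≤ q
      · left; simp only [hg, if_pos hiq]; omega
      · right; simp only [hg, if_neg hiq]; omega
    have hub : ∀ i : Fin (p + 1),
        (12 * (m:ℤ) + 1) * (g i).1 + (36 * m + 1) * (g i).2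
          ≤ (36 * (m:ℤ) + 1) * p + 36 * m ^ 2 - 3 * m + 1 + (4 * m + 1) := by
      intro i
      have hi : i.val ≤ p := by omega
      by_cases hiq : i.val ≤ q
      · have hy : ((g i).1 : ℤ) = 4 * ((q:ℤ) - i.val) + r := by
          simp only [hg, if_pos hiq]; omega
        have hz : ((g i).2 : ℤ) = (i.val : ℤ) := by simp only [hg, if_pos hiq]
        rw [hy, hz]
        have t2 : (0:ℤ) ≤ (12 * m + 3) * i.val := by positivity
        have hc4p : (c:ℤ) ≤ 4 * p - 1 := by omega
        have t3 : (0:ℤ) ≤ (12 * m + 1) * (4 * (p:ℤ) - 1 - c) := by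
          apply mul_nonneg (by positivity); linarith
        have t4 : (0:ℤ) ≤ (12 * m + 3) * ((m:ℤ) - p) := by
          apply mul_nonneg (by positivity); omega
        have hcz4 : (c:ℤ) = 4 * q + r := by omega
        nlinarith [t2, t3, t4]
      · have hj : i.val - q - 1 ≤ p - q - 1 := by omega
        have hy : ((g i).1 : ℤ) = (rr:ℤ) + 4 * ((i.val:ℤ) - q - 1) := by
          simp only [hg, if_neg hiq]; omega
        have hz : ((g i).2 : ℤ) = (q:ℤ) + m + e - ((i.val:ℤ) - q - 1) := by
          simp only [hg, if_neg hiq]; omega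
        rw [hy, hz]
        have t1 : (0:ℤ) ≤ (12 * m + 3) * ((p:ℤ) - 1 - q - ((i.val:ℤ) - q - 1)) := by
          apply mul_nonneg (by positivity); omega
        have t2 : (0:ℤ) ≤ (24 * m - 2) * ((p:ℤ) - q - 1) := by
          apply mul_nonneg (by linarith) (by omega)
        rcases hecase with ⟨he0, hrr0, hr2⟩ | ⟨he1, hrr0, hr3⟩
        · have t3 : (0:ℤ) ≤ (12 * m + 1) * (3 - (rr:ℤ)) := by
            apply mul_nonneg (by positivity); omega
          have he0' : ((e:ℤ)) = 0 := by exact_mod_cast he0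
          nlinarith [t1, t2, t3]
        · have he1' : ((e:ℤ)) = 1 := by exact_mod_cast he1
          have hrr0' : ((rr:ℤ)) = 0 := by exact_mod_cast hrr0
          nlinarith [t1, t2]
    have hdvd : ∀ i : Fin (p + 1),
        (4 * (m:ℤ) + 1) ∣ N - ((12 * m + 1) * (g i).1 + (36 * m + 1) * (g i).2) := by
      intro i
      rcases hyz i with h | h
      · have h1 : N - ((12 * (m:ℤ) + 1) * (g i).1 + (36 * m + 1) * (g i).2)
            = (N + 2 * c) - (4 * m + 1) * (3 * ((g i).1 : ℤ) + 9 * (g i).2) := by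
          linear_combination 2 * h
        rw [h1]
        exact dvd_sub hNc ⟨3 * ((g i).1 : ℤ) + 9 * (g i).2, rfl⟩
      · have h1 : N - ((12 * (m:ℤ) + 1) * (g i).1 + (36 * m + 1) * (g i).2)
            = (N + 2 * c) - (4 * m + 1) * (3 * ((g i).1 : ℤ) + 9 * (g i).2 - 2) := by
          linear_combination 2 * h
        rw [h1]
        exact dvd_sub hNc ⟨3 * ((g i).1 : ℤ) + 9 * (g i).2 - 2, rfl⟩
    refine thabit_card_ge _ _ _ (by linarith) (by linarith) (by linarith) N (p+1) g
      ?_ ?_ hdvd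
    · intro i j h
      have h1 : (g i).1 = (g j).1 := congrArg Prod.fst h
      have h2 : (g i).2 = (g j).2 := congrArg Prod.snd h
      simp only [hg] at h1 h2
      apply Fin.ext
      have hi : i.val ≤ p := by omega
      have hj : j.val ≤ p := by omega
      split_ifs at h1 h2 <;> omega
    · intro i
      refine thabit_nonneg_of_dvd _ _ hA1 (hdvd i) ?_
      have := hub i
      linarith
/-- For the triple `(4·3^n + 1, 4·3^{n+1} + 1, 4·3^{n+2} + 1)` and `0 ≤ p ≤ 3^n`,
the `p`-Frobenius number is `(4·3^{n+2} + 1)p + 4·3^{2n+2} - 3^{n+1} + 1`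
(for `n = 1` this is `109p + 316`). -/
theorem p_frobenius_thabit_second_kind_base3 (n : ℕ) (hn : 1 ≤ n)
    (p : ℕ) (hp : p ≤ 3 ^ n) :
    IsGreatest {N : ℤ |
        Nat.card {v : ℕ × ℕ × ℕ //
          ((4 * 3 ^ n + 1 : ℤ)) * v.1 + (4 * 3 ^ (n + 1) + 1) * v.2.1
            + (4 * 3 ^ (n + 2) + 1) * v.2.2 = N} ≤ p}
      ((4 * 3 ^ (n + 2) + 1) * p + 4 * 3 ^ (2 * n + 2) - 3 ^ (n + 1) + 1) := by
  have hm : 3 ≤ 3 ^ n := by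
    calc (3:ℕ) = 3 ^ 1 := (pow_one 3).symm
      _ ≤ 3 ^ n := Nat.pow_le_pow_right (by norm_num) hn
  have e : (((3:ℕ) ^ n : ℕ) : ℤ) = (3:ℤ) ^ n := by push_cast; ring
  have h1 : (4 * (3:ℤ) ^ n + 1) = 4 * (((3:ℕ) ^ n : ℕ) : ℤ) + 1 := by rw [e]
  have h2 : (4 * (3:ℤ) ^ (n + 1) + 1) = 12 * (((3:ℕ) ^ n : ℕ) : ℤ) + 1 := by
    rw [e, pow_add]; ring
  have h3 : (4 * (3:ℤ) ^ (n + 2) + 1) = 36 * (((3:ℕ) ^ n : ℕ) : ℤ) + 1 := by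
    rw [e, pow_add]; ring
  have hNs : (4 * (3:ℤ) ^ (n + 2) + 1) * p + 4 * 3 ^ (2 * n + 2) - 3 ^ (n + 1) + 1
      = (36 * (((3:ℕ) ^ n : ℕ) : ℤ) + 1) * p + 36 * (((3:ℕ) ^ n : ℕ) : ℤ) ^ 2
        - 3 * (((3:ℕ) ^ n : ℕ) : ℤ) + 1 := by
    have e2 : (3:ℤ) ^ (2 * n + 2) = ((3:ℤ) ^ n) ^ 2 * 9 := by
      rw [show 2 * n + 2 = n * 2 + 2 from by ring, pow_add, pow_mul]; ring
    rw [e, e2, pow_add]; ring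
  constructor
  · show Nat.card _ ≤ p
    rw [hNs, h1, h2, h3]
    exact thabit_memb (3 ^ n) p hm hp
  · intro N hNmem
    by_contra hcon
    push_neg at hcon
    have hub := thabit_ub (3 ^ n) p hm hp N (by rw [← hNs]; exact hcon)
    simp only [Set.mem_setOf_eq] at hNmem
    rw [h1, h2, h3] at hNmem
    omega
end
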